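/- arXiv:1110.6692 — 5 statements merged into one kernel-verified Lean document; each statement's English description precedes it below -/
import Mathlib

section
/- If F is an injective contractive IFS with mask M and associated dynamical system (A, T), where T(x) = f_i^{-1}(x) when x ∈ M_i, then for every x ∈ A the itinerary of x under T (the sequence i₀i₁i₂⋯ with T^k(x) ∈ M_{i_k}) equals the masked address τ_M(x). -/
/-!
Both directions are an induction on `k` that peels off the first letter of the string: on `M i`
the map `T` is a right inverse of `f i`, and, because `f i` is injective, also a left inverse of
`f i` at every point that `f i` sends into `M i`. Hence `T` shifts the itinerary and the masked
address of `x` to those of `T x` in the same way.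
-/

open Set Function

def fword {X : Type*} {N : ℕ} (f : Fin N → X → X) : List (Fin N) → X → X
  | [] => id
  | (i :: l) => f i ∘ fword f l

theorem fword_ofFn_succ {X : Type*} {N : ℕ} (f : Fin N → X → X) (it : ℕ → Fin N) (k : ℕ) :
    fword f (List.ofFn fun j : Fin (k + 1) => it j) =
      f (it 0) ∘ fword f (List.ofFn fun j : Fin k => it (j + 1)) := by
  simp only [List.ofFn_succ, Fin.val_zero, Fin.val_succ, fword]

section MaskedAddress

variable {X : Type*} {N : ℕ} {f : Fin N → X → X} {M : Fin N → Set X} {T : X → X}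

theorem apply_eq_of_apply_mem (hinj : ∀ i, Injective (f i))
    (hT : ∀ i, ∀ x ∈ M i, f i (T x) = x) {i : Fin N} {y : X} (hy : f i y ∈ M i) :
    T (f i y) = y :=
  hinj i (hT i _ hy)

theorem fword_iterate_eq_self (hT : ∀ i, ∀ x ∈ M i, f i (T x) = x) :
    ∀ (k : ℕ) (it : ℕ → Fin N) (x : X), (∀ m, T^[m] x ∈ M (it m)) →
      fword f (List.ofFn fun j : Fin k => it j) (T^[k] x) = x
  | 0, _, _, _ => rfl
  | k + 1, it, x, h => by
    rw [fword_ofFn_succ, comp_apply, iterate_succ_apply,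
      fword_iterate_eq_self hT k (fun n => it (n + 1)) (T x) fun m => h (m + 1)]
    exact hT (it 0) x (h 0)

theorem iterate_mem_of_mem_fword_image (hinj : ∀ i, Injective (f i))
    (hT : ∀ i, ∀ x ∈ M i, f i (T x) = x) :
    ∀ (k : ℕ) (it : ℕ → Fin N) (x : X),
      (∀ m, x ∈ fword f (List.ofFn fun j : Fin m => it j) '' M (it m)) → T^[k] x ∈ M (it k)
  | 0, it, x, h => by simpa [fword] using h 0
  | k + 1, it, x, h => by
    have hx : x ∈ M (it 0) := by simpa [fword] using h 0
    have hTx : ∀ m, T x ∈ fword f (List.ofFn fun j : Fin m => it (j + 1)) '' M (it (m + 1)) := by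
      intro m
      obtain ⟨z, hz, rfl⟩ := h (m + 1)
      rw [fword_ofFn_succ, comp_apply] at hx ⊢
      exact ⟨z, hz, (apply_eq_of_apply_mem hinj hT hx).symm⟩
    exact iterate_mem_of_mem_fword_image hinj hT k (fun n => it (n + 1)) (T x) hTx

end MaskedAddress

theorem stmt2_general {X : Type*} {N : ℕ} (f : Fin N → X → X)
    (A : Set X)
    (hinj : ∀ i, Function.Injective (f i))
    (M : Fin N → Set X)
    (T : X → X)
    (hT : ∀ i, ∀ x ∈ M i, f i (T x) = x) :
    ∀ x ∈ A, ∀ it : ℕ → Fin N,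
      (∀ k : ℕ, T^[k] x ∈ M (it k)) ↔
      (∀ k : ℕ, x ∈ fword f (List.ofFn (fun j : Fin k => it j)) '' (M (it k))) :=
  fun x _ it =>
    ⟨fun h k => ⟨T^[k] x, h k, fword_iterate_eq_self hT k it x h⟩,
      fun h k => iterate_mem_of_mem_fword_image hinj hT k it x h⟩

/-- For an injective contractive masked IFS with associated dynamical system `T`
(`T x = f_i⁻¹ x` on `M i`), the itinerary of a point `x ∈ A` is exactly its masked
address: the string `it` satisfies `T^[k] x ∈ M (it k)` for all `k` iff
`x ∈ f_{it 0} ∘ ⋯ ∘ f_{it (k-1)} (M (it k))` for all `k`. -/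
theorem stmt2 {X : Type*} [MetricSpace X] {N : ℕ} (f : Fin N → X → X)
    (A : Set X) (hA : IsCompact A) (hAne : A.Nonempty)
    (hlip : ∀ i, ∃ c : NNReal, c < 1 ∧ LipschitzWith c (f i))
    (hinj : ∀ i, Function.Injective (f i))
    (hFA : (⋃ i, f i '' A) = A)
    (M : Fin N → Set X)
    (hdisj : ∀ i j, i ≠ j → Disjoint (M i) (M j))
    (hcover : (⋃ i, M i) = A)
    (hmask : ∀ i, M i ⊆ f i '' A)
    (T : X → X)
    (hT : ∀ i, ∀ x ∈ M i, f i (T x) = x) :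
    ∀ x ∈ A, ∀ it : ℕ → Fin N,
      (∀ k : ℕ, T^[k] x ∈ M (it k)) ↔
      (∀ k : ℕ, x ∈ fword f (List.ofFn (fun j : Fin k => it j)) '' (M (it k))) :=
  stmt2_general f A hinj M T hT
end

section
/- For an overlapping masked IFS with mask point q, if x, y ∈ [0,1] with x > y, then τ_q^-(x) ≻ τ_q^+(y) in the lexicographic order on {0,1}^∞. Consequently, both sections τ_q^+ and τ_q^- are strictly increasing functions from [0,1] to {0,1}^∞ (with lexicographic order). -/
/-!
Inverting a branch `f_i` with contraction ratio `c < 1` gives a map that expands distances by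
`1 / c` on the part of `[0,1]` where the mask selects it. If `y < x` and `τ_q^+(y)`, `τ_q^-(x)`
agree on their first `n` symbols, the two orbits stay in this order at every step and their gap
after `n` steps is at least `(x - y) / cⁿ`; as the gap never exceeds `1`, the codes must differ,
and at the first difference `Tⁿ y < Tⁿ x` forces the symbol of `y` to be `0` and that of `x` to
be `1`. Monotonicity of each section then follows from `τ_q^-(z) ⪯ τ_q^+(z)`: the two orbits of
`z` coincide until one of them hits `q`, where the minus code reads `0` and the plus code `1`.
-/

open Set Filter Topology

/-- Strict lexicographic order on binary strings. -/
def lexLt (σ ω : ℕ → Bool) : Prop :=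
  ∃ k, (∀ j < k, σ j = ω j) ∧ σ k < ω k

/-- Lexicographic order on binary strings. -/
def lexLe (σ ω : ℕ → Bool) : Prop := lexLt σ ω ∨ σ = ω

/-- n-fold shift. -/
def shiftn (n : ℕ) (ω : ℕ → Bool) : ℕ → Bool := fun k => ω (k + n)

/-- Plus dynamical system: boundary point goes to the 0-branch inverse `g1` side, i.e. `x ≥ q` uses `g1`. -/
noncomputable def Tplus (g0 g1 : ℝ → ℝ) (q : ℝ) (x : ℝ) : ℝ := if x < q then g0 x else g1 x

noncomputable def Tminus (g0 g1 : ℝ → ℝ) (q : ℝ) (x : ℝ) : ℝ := if x ≤ q then g0 x else g1 x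

/-- Itinerary under the plus system. -/
noncomputable def tauPlus (g0 g1 : ℝ → ℝ) (q : ℝ) (x : ℝ) : ℕ → Bool :=
  fun n => decide (q ≤ (Tplus g0 g1 q)^[n] x)

/-- Itinerary under the minus system. -/
noncomputable def tauMinus (g0 g1 : ℝ → ℝ) (q : ℝ) (x : ℝ) : ℕ → Bool :=
  fun n => decide (q < (Tminus g0 g1 q)^[n] x)

/-- Coding map of the uniform IFS with ratio `a`. -/
noncomputable def piU (a : ℝ) (ω : ℕ → Bool) : ℝ := (1 - a) * ∑' k : ℕ, (cond (ω k) (a ^ k) 0)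

/-- `wordMap u0 u1 σ k = f_{σ|k} = f_{σ 0} ∘ ⋯ ∘ f_{σ k}`. -/
def wordMap (u0 u1 : ℝ → ℝ) (σ : ℕ → Bool) : ℕ → ℝ → ℝ
  | 0 => cond (σ 0) u1 u0
  | (k+1) => fun x => wordMap u0 u1 σ k ((cond (σ (k+1)) u1 u0) x)

/-- Coding map of the IFS `(u0, u1)`. -/
noncomputable def piCode (u0 u1 : ℝ → ℝ) (σ : ℕ → Bool) : ℝ :=
  limUnder atTop (fun k => wordMap u0 u1 σ k 0)

/-- `h` is a homeomorphism of `[0,1]` onto itself. -/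
def IsIccHomeo (h : ℝ → ℝ) : Prop :=
  ∃ h' : ℝ → ℝ, ContinuousOn h (Icc 0 1) ∧ ContinuousOn h' (Icc 0 1) ∧
    MapsTo h (Icc 0 1) (Icc 0 1) ∧ MapsTo h' (Icc 0 1) (Icc 0 1) ∧
    (∀ x ∈ Icc (0:ℝ) 1, h' (h x) = x) ∧ (∀ y ∈ Icc (0:ℝ) 1, h (h' y) = y)

lemma lexLt_trans {σ ω υ : ℕ → Bool} (h₁ : lexLt σ ω) (h₂ : lexLt ω υ) : lexLt σ υ := by
  obtain ⟨k, hk, hkl⟩ := h₁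
  obtain ⟨m, hm, hml⟩ := h₂
  rcases lt_trichotomy k m with h | rfl | h
  · exact ⟨k, fun j hj => (hk j hj).trans (hm j (hj.trans h)), hm k h ▸ hkl⟩
  · exact ⟨k, fun j hj => (hk j hj).trans (hm j hj), hkl.trans hml⟩
  · exact ⟨m, fun j hj => (hk j (hj.trans h)).trans (hm j hj), (hk m h).symm ▸ hml⟩

lemma lexLt_of_lexLt_of_lexLe {σ ω υ : ℕ → Bool} (h₁ : lexLt σ ω) (h₂ : lexLe ω υ) :
    lexLt σ υ := by
  rcases h₂ with h₂ | rfl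
  exacts [lexLt_trans h₁ h₂, h₁]

lemma lexLt_of_lexLe_of_lexLt {σ ω υ : ℕ → Bool} (h₁ : lexLe σ ω) (h₂ : lexLt ω υ) :
    lexLt σ υ := by
  rcases h₁ with h₁ | rfl
  exacts [lexLt_trans h₁ h₂, h₂]

lemma lexLt_of_ne_of_forall_le {σ ω : ℕ → Bool} (hne : σ ≠ ω)
    (hle : ∀ k, (∀ j < k, σ j = ω j) → σ k ≤ ω k) : lexLt σ ω := by
  classical
  have hdiff : ∃ k, σ k ≠ ω k := Function.ne_iff.mp hne
  have hprefix : ∀ j < Nat.find hdiff, σ j = ω j := fun j hj => not_not.mp (Nat.find_min hdiff hj)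
  exact ⟨Nat.find hdiff, hprefix, lt_of_le_of_ne (hle _ hprefix) (Nat.find_spec hdiff)⟩

lemma Tminus_eq_Tplus {g0 g1 : ℝ → ℝ} {q w : ℝ} (hw : w ≠ q) :
    Tminus g0 g1 q w = Tplus g0 g1 q w := by
  rcases hw.lt_or_gt with h | h
  · simp [Tminus, Tplus, h, h.le]
  · simp [Tminus, Tplus, h.not_ge, h.not_gt]

lemma iterate_Tminus_eq_iterate_Tplus {g0 g1 : ℝ → ℝ} {q z : ℝ} :
    ∀ n, (∀ j < n, tauMinus g0 g1 q z j = tauPlus g0 g1 q z j) →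
      (Tminus g0 g1 q)^[n] z = (Tplus g0 g1 q)^[n] z
  | 0, _ => rfl
  | n + 1, h => by
    have ih := iterate_Tminus_eq_iterate_Tplus n fun j hj => h j (hj.trans n.lt_succ_self)
    have hcode := h n n.lt_succ_self
    simp only [tauMinus, tauPlus, ih] at hcode
    have hne : (Tplus g0 g1 q)^[n] z ≠ q := by
      rintro heq
      simp [heq] at hcode
    rw [Function.iterate_succ_apply', Function.iterate_succ_apply', ih, Tminus_eq_Tplus hne]

lemma tauMinus_lexLe_tauPlus (g0 g1 : ℝ → ℝ) (q z : ℝ) :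
    lexLe (tauMinus g0 g1 q z) (tauPlus g0 g1 q z) := by
  by_cases heq : tauMinus g0 g1 q z = tauPlus g0 g1 q z
  · exact Or.inr heq
  refine Or.inl (lexLt_of_ne_of_forall_le heq fun k hprefix => ?_)
  simp only [tauMinus, tauPlus, iterate_Tminus_eq_iterate_Tplus k hprefix]
  exact Bool.le_iff_imp.mpr fun h => decide_eq_true (of_decide_eq_true h).le

structure IsExpandingBranch (g : ℝ → ℝ) (c : ℝ) (s : Set ℝ) : Prop where
  mapsTo : MapsTo g s (Icc 0 1)
  expands : ∀ u ∈ s, ∀ v ∈ s, u ≤ v → v - u ≤ c * (g v - g u)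

lemma isExpandingBranch_of_leftInvOn {f g : ℝ → ℝ} {c : ℝ} (hmono : StrictMonoOn f (Icc 0 1))
    (hcont : ContinuousOn f (Icc 0 1))
    (hlip : ∀ x ∈ Icc (0:ℝ) 1, ∀ y ∈ Icc (0:ℝ) 1, |f x - f y| ≤ c * |x - y|)
    (hg : ∀ x ∈ Icc (0:ℝ) 1, g (f x) = x) : IsExpandingBranch g c (Icc (f 0) (f 1)) := by
  have hsurj := intermediate_value_Icc zero_le_one hcont
  constructor
  · rintro u hu
    obtain ⟨a, ha, rfl⟩ := hsurj hu
    rwa [hg a ha]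
  · rintro u hu v hv huv
    obtain ⟨a, ha, rfl⟩ := hsurj hu
    obtain ⟨b, hb, rfl⟩ := hsurj hv
    have hab : a ≤ b := (hmono.le_iff_le ha hb).mp huv
    have := hlip b hb a ha
    rw [abs_of_nonneg (sub_nonneg.mpr huv), abs_of_nonneg (sub_nonneg.mpr hab)] at this
    rwa [hg a ha, hg b hb]

lemma IsExpandingBranch.mono {g : ℝ → ℝ} {c : ℝ} {s t : Set ℝ} (h : IsExpandingBranch g c s)
    (hts : t ⊆ s) : IsExpandingBranch g c t :=
  ⟨h.mapsTo.mono_left hts, fun u hu v hv => h.expands u (hts hu) v (hts hv)⟩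

section Itineraries

variable {g0 g1 : ℝ → ℝ} {q c : ℝ}

lemma Tplus_Tminus_step (h0 : IsExpandingBranch g0 c (Icc 0 q))
    (h1 : IsExpandingBranch g1 c (Icc q 1)) {u v : ℝ} (hu : u ∈ Icc (0:ℝ) 1)
    (hv : v ∈ Icc (0:ℝ) 1) (huv : u < v) (hcode : decide (q ≤ u) = decide (q < v)) :
    Tplus g0 g1 q u ∈ Icc (0:ℝ) 1 ∧ Tminus g0 g1 q v ∈ Icc (0:ℝ) 1 ∧
      v - u ≤ c * (Tminus g0 g1 q v - Tplus g0 g1 q u) := by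
  by_cases hqu : q ≤ u
  · have hqv : q < v := of_decide_eq_true (hcode ▸ decide_eq_true hqu)
    have hu' : u ∈ Icc q 1 := ⟨hqu, hu.2⟩
    have hv' : v ∈ Icc q 1 := ⟨hqv.le, hv.2⟩
    simp only [Tplus, Tminus, hqu.not_gt, hqv.not_ge, if_false]
    exact ⟨h1.mapsTo hu', h1.mapsTo hv', h1.expands u hu' v hv' huv.le⟩
  · have hvq : v ≤ q := not_lt.mp (of_decide_eq_false (hcode ▸ decide_eq_false hqu))
    have hu' : u ∈ Icc 0 q := ⟨hu.1, (huv.trans_le hvq).le⟩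
    have hv' : v ∈ Icc 0 q := ⟨hv.1, hvq⟩
    simp only [Tplus, Tminus, not_le.mp hqu, hvq, if_true]
    exact ⟨h0.mapsTo hu', h0.mapsTo hv', h0.expands u hu' v hv' huv.le⟩

lemma iterate_Tplus_Tminus_gap (h0 : IsExpandingBranch g0 c (Icc 0 q))
    (h1 : IsExpandingBranch g1 c (Icc q 1)) (hc : 0 ≤ c) {x y : ℝ} (hx : x ∈ Icc (0:ℝ) 1)
    (hy : y ∈ Icc (0:ℝ) 1) (hyx : y < x) :
    ∀ n, (∀ j < n, tauPlus g0 g1 q y j = tauMinus g0 g1 q x j) →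
      (Tplus g0 g1 q)^[n] y ∈ Icc (0:ℝ) 1 ∧ (Tminus g0 g1 q)^[n] x ∈ Icc (0:ℝ) 1 ∧
        x - y ≤ c ^ n * ((Tminus g0 g1 q)^[n] x - (Tplus g0 g1 q)^[n] y)
  | 0, _ => ⟨hy, hx, by simp⟩
  | n + 1, h => by
    obtain ⟨hyn, hxn, hgap⟩ :=
      iterate_Tplus_Tminus_gap h0 h1 hc hx hy hyx n fun j hj => h j (hj.trans n.lt_succ_self)
    have hlt : (Tplus g0 g1 q)^[n] y < (Tminus g0 g1 q)^[n] x :=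
      sub_pos.mp (pos_of_mul_pos_right ((sub_pos.mpr hyx).trans_le hgap) (pow_nonneg hc n))
    obtain ⟨hyn', hxn', hstep⟩ := Tplus_Tminus_step h0 h1 hyn hxn hlt (h n n.lt_succ_self)
    rw [Function.iterate_succ_apply', Function.iterate_succ_apply']
    refine ⟨hyn', hxn', ?_⟩
    calc x - y ≤ c ^ n * ((Tminus g0 g1 q)^[n] x - (Tplus g0 g1 q)^[n] y) := hgap
      _ ≤ c ^ n * (c * (Tminus g0 g1 q ((Tminus g0 g1 q)^[n] x) -
            Tplus g0 g1 q ((Tplus g0 g1 q)^[n] y))) := by gcongr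
      _ = _ := by ring

lemma tauPlus_lexLt_tauMinus (h0 : IsExpandingBranch g0 c (Icc 0 q))
    (h1 : IsExpandingBranch g1 c (Icc q 1)) (hc : 0 ≤ c) (hc1 : c < 1) {x y : ℝ}
    (hx : x ∈ Icc (0:ℝ) 1) (hy : y ∈ Icc (0:ℝ) 1) (hyx : y < x) :
    lexLt (tauPlus g0 g1 q y) (tauMinus g0 g1 q x) := by
  have hgap := iterate_Tplus_Tminus_gap h0 h1 hc hx hy hyx
  refine lexLt_of_ne_of_forall_le ?_ fun k hprefix => ?_
  · intro heq
    obtain ⟨n, hn⟩ := exists_pow_lt_of_lt_one (sub_pos.mpr hyx) hc1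
    obtain ⟨hyn, hxn, hgapn⟩ := hgap n fun j _ => congrFun heq j
    have : x - y ≤ c ^ n := hgapn.trans
      (mul_le_of_le_one_right (pow_nonneg hc n) (by linarith [hyn.1, hxn.2]))
    linarith
  · obtain ⟨-, -, hgapk⟩ := hgap k hprefix
    have hlt : (Tplus g0 g1 q)^[k] y < (Tminus g0 g1 q)^[k] x :=
      sub_pos.mp (pos_of_mul_pos_right ((sub_pos.mpr hyx).trans_le hgapk) (pow_nonneg hc k))
    exact Bool.le_iff_imp.mpr fun h => decide_eq_true ((of_decide_eq_true h).trans_lt hlt)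

end Itineraries

theorem stmt3_general
    (f0 f1 g0 g1 : ℝ → ℝ) (q : ℝ)
    (hf0m : StrictMonoOn f0 (Icc 0 1)) (hf1m : StrictMonoOn f1 (Icc 0 1))
    (hf0c : ContinuousOn f0 (Icc 0 1)) (hf1c : ContinuousOn f1 (Icc 0 1))
    (hf0lip : ∃ c, 0 ≤ c ∧ c < 1 ∧ ∀ x ∈ Icc (0:ℝ) 1, ∀ y ∈ Icc (0:ℝ) 1, |f0 x - f0 y| ≤ c * |x - y|)
    (hf1lip : ∃ c, 0 ≤ c ∧ c < 1 ∧ ∀ x ∈ Icc (0:ℝ) 1, ∀ y ∈ Icc (0:ℝ) 1, |f1 x - f1 y| ≤ c * |x - y|)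
    (hf00 : f0 0 = 0) (hf11 : f1 1 = 1)
    (hq : q ∈ Ioo (f1 0) (f0 1))
    (hg0 : ∀ x ∈ Icc (0:ℝ) 1, g0 (f0 x) = x) (hg1 : ∀ x ∈ Icc (0:ℝ) 1, g1 (f1 x) = x) :
    (∀ x ∈ Icc (0:ℝ) 1, ∀ y ∈ Icc (0:ℝ) 1, y < x →
        lexLt (tauPlus g0 g1 q y) (tauMinus g0 g1 q x)) ∧
    (∀ x ∈ Icc (0:ℝ) 1, ∀ y ∈ Icc (0:ℝ) 1, y < x →
        lexLt (tauPlus g0 g1 q y) (tauPlus g0 g1 q x) ∧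
        lexLt (tauMinus g0 g1 q y) (tauMinus g0 g1 q x)) := by
  obtain ⟨c0, hc0, hc01, hlip0⟩ := hf0lip
  obtain ⟨c1, hc1, hc11, hlip1⟩ := hf1lip
  set c := max c0 c1
  have hbranch0 : IsExpandingBranch g0 c (Icc 0 q) :=
    (isExpandingBranch_of_leftInvOn hf0m hf0c (fun x hx y hy =>
      (hlip0 x hx y hy).trans (by gcongr; exact le_max_left c0 c1)) hg0).mono
      (Icc_subset_Icc hf00.le hq.2.le)
  have hbranch1 : IsExpandingBranch g1 c (Icc q 1) :=
    (isExpandingBranch_of_leftInvOn hf1m hf1c (fun x hx y hy =>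
      (hlip1 x hx y hy).trans (by gcongr; exact le_max_right c0 c1)) hg1).mono
      (Icc_subset_Icc hq.1.le hf11.ge)
  have hmain : ∀ x ∈ Icc (0:ℝ) 1, ∀ y ∈ Icc (0:ℝ) 1, y < x →
      lexLt (tauPlus g0 g1 q y) (tauMinus g0 g1 q x) := fun x hx y hy hyx =>
    tauPlus_lexLt_tauMinus hbranch0 hbranch1 (le_max_of_le_left hc0) (max_lt hc01 hc11) hx hy hyx
  refine ⟨hmain, fun x hx y hy hyx => ⟨?_, ?_⟩⟩
  · exact lexLt_of_lexLt_of_lexLe (hmain x hx y hy hyx) (tauMinus_lexLe_tauPlus g0 g1 q x)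
  · exact lexLt_of_lexLe_of_lexLt (tauMinus_lexLe_tauPlus g0 g1 q y) (hmain x hx y hy hyx)

/-- Statement 1 and 2 of Theorem 5 (address-space theorem): if `x > y` then
`τ_q^-(x) ≻ τ_q^+(y)`, and both sections are strictly increasing. -/
theorem stmt3
    (f0 f1 g0 g1 : ℝ → ℝ) (q : ℝ)
    (hf0m : StrictMonoOn f0 (Icc 0 1)) (hf1m : StrictMonoOn f1 (Icc 0 1))
    (hf0c : ContinuousOn f0 (Icc 0 1)) (hf1c : ContinuousOn f1 (Icc 0 1))
    (hf0map : MapsTo f0 (Icc 0 1) (Icc 0 1)) (hf1map : MapsTo f1 (Icc 0 1) (Icc 0 1))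
    (hf0lip : ∃ c, 0 ≤ c ∧ c < 1 ∧ ∀ x ∈ Icc (0:ℝ) 1, ∀ y ∈ Icc (0:ℝ) 1, |f0 x - f0 y| ≤ c * |x - y|)
    (hf1lip : ∃ c, 0 ≤ c ∧ c < 1 ∧ ∀ x ∈ Icc (0:ℝ) 1, ∀ y ∈ Icc (0:ℝ) 1, |f1 x - f1 y| ≤ c * |x - y|)
    (hf00 : f0 0 = 0) (hf11 : f1 1 = 1)
    (hf10pos : 0 < f1 0) (hoverf0f1 : f1 0 < f0 1) (hf01lt : f0 1 < 1)
    (hq : q ∈ Ioo (f1 0) (f0 1))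
    (hg0 : ∀ x ∈ Icc (0:ℝ) 1, g0 (f0 x) = x) (hg1 : ∀ x ∈ Icc (0:ℝ) 1, g1 (f1 x) = x) :
    (∀ x ∈ Icc (0:ℝ) 1, ∀ y ∈ Icc (0:ℝ) 1, y < x →
        lexLt (tauPlus g0 g1 q y) (tauMinus g0 g1 q x)) ∧
    (∀ x ∈ Icc (0:ℝ) 1, ∀ y ∈ Icc (0:ℝ) 1, y < x →
        lexLt (tauPlus g0 g1 q y) (tauPlus g0 g1 q x) ∧
        lexLt (tauMinus g0 g1 q y) (tauMinus g0 g1 q x)) :=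
  stmt3_general f0 f1 g0 g1 q hf0m hf1m hf0c hf1c hf0lip hf1lip hf00 hf11 hq hg0 hg1
end

section
/- For an overlapping masked IFS with mask point q and critical itineraries α = τ_q^-(q), β = τ_q^+(q), the address space of the minus section is exactly Ω_q^- = { ω ∈ {0,1}^∞ : for all n ≥ 0, S^n(ω) ∈ [0̄, α] ∪ (β, 1̄] }, where S is the shift, 0̄ = 000⋯, 1̄ = 111⋯, and intervals are with respect to the lexicographic order. -/
open Set Filter Topology

/-! ### Auxiliary development -/

lemma OGIFS.bool_lt_iff (a b : Bool) : a < b ↔ a = false ∧ b = true := by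
  cases a <;> cases b <;> simp

lemma OGIFS.lexLe_trans_lt {a b c : ℕ → Bool} (h1 : lexLe a b) (h2 : lexLt b c) : lexLt a c := by
  rcases h1 with h1 | rfl
  · obtain ⟨k1, ha1, hl1⟩ := h1
    obtain ⟨k2, ha2, hl2⟩ := h2
    rcases lt_trichotomy k1 k2 with h | rfl | h
    · exact ⟨k1, fun j hj => (ha1 j hj).trans (ha2 j (hj.trans h)),
        by rw [← ha2 k1 h]; exact hl1⟩
    · rw [OGIFS.bool_lt_iff] at hl1 hl2
      rw [hl1.2] at hl2
      exact absurd hl2.1 (by simp)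
    · exact ⟨k2, fun j hj => (ha1 j (hj.trans h)).trans (ha2 j hj),
        by rw [ha1 k2 h]; exact hl2⟩
  · exact h2

namespace OGIFS

/-- Bundled hypotheses for the overlapping IFS. -/
structure Setup (f0 f1 g0 g1 : ℝ → ℝ) (q c : ℝ) : Prop where
  m0 : StrictMonoOn f0 (Icc 0 1)
  m1 : StrictMonoOn f1 (Icc 0 1)
  co0 : ContinuousOn f0 (Icc 0 1)
  co1 : ContinuousOn f1 (Icc 0 1)
  map0 : MapsTo f0 (Icc 0 1) (Icc 0 1)
  map1 : MapsTo f1 (Icc 0 1) (Icc 0 1)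
  hc0 : 0 ≤ c
  hc1 : c < 1
  lip0 : ∀ x ∈ Icc (0:ℝ) 1, ∀ y ∈ Icc (0:ℝ) 1, |f0 x - f0 y| ≤ c * |x - y|
  lip1 : ∀ x ∈ Icc (0:ℝ) 1, ∀ y ∈ Icc (0:ℝ) 1, |f1 x - f1 y| ≤ c * |x - y|
  e00 : f0 0 = 0
  e11 : f1 1 = 1
  pos10 : 0 < f1 0
  hq1 : f1 0 < q
  hq2 : q < f0 1
  lt1 : f0 1 < 1

def dom (f0 f1 : ℝ → ℝ) (b : Bool) : Set ℝ := cond b (Icc (f1 0) 1) (Icc 0 (f0 1))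

variable {f0 f1 g0 g1 : ℝ → ℝ} {q c : ℝ}

/-- extra inverse hypotheses, kept outside the structure for convenience -/
structure Inv (f0 f1 g0 g1 : ℝ → ℝ) : Prop where
  inv0 : ∀ x ∈ Icc (0:ℝ) 1, g0 (f0 x) = x
  inv1 : ∀ x ∈ Icc (0:ℝ) 1, g1 (f1 x) = x

lemma tauMinus_def (g0 g1 : ℝ → ℝ) (q x : ℝ) (n : ℕ) :
    tauMinus g0 g1 q x n = decide (q < (Tminus g0 g1 q)^[n] x) := rfl

lemma tauPlus_def (g0 g1 : ℝ → ℝ) (q x : ℝ) (n : ℕ) :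
    tauPlus g0 g1 q x n = decide (q ≤ (Tplus g0 g1 q)^[n] x) := rfl

lemma tauMinus_shiftn (g0 g1 : ℝ → ℝ) (q x : ℝ) (n : ℕ) :
    shiftn n (tauMinus g0 g1 q x) = tauMinus g0 g1 q ((Tminus g0 g1 q)^[n] x) := by
  funext k
  show tauMinus g0 g1 q x (k + n) = _
  rw [tauMinus_def, tauMinus_def, Function.iterate_add_apply]

lemma tauMinus_shift1 (g0 g1 : ℝ → ℝ) (q x : ℝ) :
    shiftn 1 (tauMinus g0 g1 q x) = tauMinus g0 g1 q (Tminus g0 g1 q x) := by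
  rw [tauMinus_shiftn, Function.iterate_one]

lemma Setup.q01 (S : Setup f0 f1 g0 g1 q c) : q ∈ Icc (0:ℝ) 1 :=
  ⟨(lt_trans S.pos10 S.hq1).le, (lt_trans S.hq2 S.lt1).le⟩

lemma Setup.Fmem (S : Setup f0 f1 g0 g1 q c) (b : Bool) {x : ℝ} (hx : x ∈ Icc (0:ℝ) 1) :
    cond b f1 f0 x ∈ Icc (0:ℝ) 1 := by
  cases b
  · exact S.map0 hx
  · exact S.map1 hx

lemma Setup.Flip (S : Setup f0 f1 g0 g1 q c) (b : Bool) :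
    ∀ x ∈ Icc (0:ℝ) 1, ∀ y ∈ Icc (0:ℝ) 1, |cond b f1 f0 x - cond b f1 f0 y| ≤ c * |x - y| := by
  cases b
  · exact S.lip0
  · exact S.lip1

lemma Setup.branch_mem (S : Setup f0 f1 g0 g1 q c) (b : Bool) {x : ℝ} (hx : x ∈ Icc (0:ℝ) 1) :
    cond b f1 f0 x ∈ dom f0 f1 b := by
  have h0 : (0:ℝ) ∈ Icc (0:ℝ) 1 := ⟨le_refl 0, zero_le_one⟩
  have h1 : (1:ℝ) ∈ Icc (0:ℝ) 1 := ⟨zero_le_one, le_refl 1⟩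
  cases b
  · exact ⟨by rw [← S.e00]; exact S.m0.monotoneOn h0 hx hx.1,
      S.m0.monotoneOn hx h1 hx.2⟩
  · exact ⟨S.m1.monotoneOn h0 hx hx.1,
      by rw [← S.e11]; exact S.m1.monotoneOn hx h1 hx.2⟩

lemma Setup.ginv (S : Setup f0 f1 g0 g1 q c) (hI : Inv f0 f1 g0 g1) (b : Bool) {x : ℝ}
    (hx : x ∈ dom f0 f1 b) :
    cond b g1 g0 x ∈ Icc (0:ℝ) 1 ∧ cond b f1 f0 (cond b g1 g0 x) = x := by
  cases b
  · have hx' : x ∈ Icc (f0 0) (f0 1) := by rw [S.e00]; exact hx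
    obtain ⟨z, hz, hfz⟩ := intermediate_value_Icc zero_le_one S.co0 hx'
    have hg : g0 x = z := by rw [← hfz, hI.inv0 z hz]
    show g0 x ∈ Icc (0:ℝ) 1 ∧ f0 (g0 x) = x
    rw [hg, hfz]
    exact ⟨hz, rfl⟩
  · have hx' : x ∈ Icc (f1 0) (f1 1) := by rw [S.e11]; exact hx
    obtain ⟨z, hz, hfz⟩ := intermediate_value_Icc zero_le_one S.co1 hx'
    have hg : g1 x = z := by rw [← hfz, hI.inv1 z hz]
    show g1 x ∈ Icc (0:ℝ) 1 ∧ f1 (g1 x) = x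
    rw [hg, hfz]
    exact ⟨hz, rfl⟩

lemma Setup.FG (S : Setup f0 f1 g0 g1 q c) (hI : Inv f0 f1 g0 g1) (b : Bool) {x : ℝ}
    (hx : x ∈ Icc (0:ℝ) 1) : cond b g1 g0 (cond b f1 f0 x) = x := by
  cases b
  · exact hI.inv0 x hx
  · exact hI.inv1 x hx

lemma Setup.gmono (S : Setup f0 f1 g0 g1 q c) (hI : Inv f0 f1 g0 g1) (b : Bool) {a a' : ℝ}
    (ha : a ∈ dom f0 f1 b) (ha' : a' ∈ dom f0 f1 b) (h : a ≤ a') :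
    cond b g1 g0 a ≤ cond b g1 g0 a' := by
  by_contra hcon
  push_neg at hcon
  have h1 := S.ginv hI b ha
  have h2 := S.ginv hI b ha'
  have hF : cond b f1 f0 (cond b g1 g0 a') < cond b f1 f0 (cond b g1 g0 a) := by
    cases b
    · exact S.m0 h2.1 h1.1 hcon
    · exact S.m1 h2.1 h1.1 hcon
  rw [h1.2, h2.2] at hF
  exact absurd hF (not_lt.mpr h)

lemma Setup.gexp (S : Setup f0 f1 g0 g1 q c) (hI : Inv f0 f1 g0 g1) (b : Bool) {a a' : ℝ}
    (ha : a ∈ dom f0 f1 b) (ha' : a' ∈ dom f0 f1 b) :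
    |a - a'| ≤ c * |cond b g1 g0 a - cond b g1 g0 a'| := by
  have h1 := S.ginv hI b ha
  have h2 := S.ginv hI b ha'
  have h := S.Flip b _ h1.1 _ h2.1
  rw [h1.2, h2.2] at h
  exact h

lemma Setup.Tminus_step (S : Setup f0 f1 g0 g1 q c) {z : ℝ} (hz : z ∈ Icc (0:ℝ) 1) :
    z ∈ dom f0 f1 (decide (q < z)) ∧ Tminus g0 g1 q z = cond (decide (q < z)) g1 g0 z := by
  rcases le_or_gt z q with h | h
  · rw [decide_eq_false (not_lt.mpr h)]
    refine ⟨show z ∈ Icc 0 (f0 1) from ⟨hz.1, h.trans S.hq2.le⟩, ?_⟩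
    show Tminus g0 g1 q z = g0 z
    simp only [Tminus, if_pos h]
  · rw [decide_eq_true h]
    refine ⟨show z ∈ Icc (f1 0) 1 from ⟨(lt_trans S.hq1 h).le, hz.2⟩, ?_⟩
    show Tminus g0 g1 q z = g1 z
    simp only [Tminus, if_neg (not_le.mpr h)]

lemma Setup.Tplus_step (S : Setup f0 f1 g0 g1 q c) {z : ℝ} (hz : z ∈ Icc (0:ℝ) 1) :
    z ∈ dom f0 f1 (decide (q ≤ z)) ∧ Tplus g0 g1 q z = cond (decide (q ≤ z)) g1 g0 z := by
  rcases lt_or_ge z q with h | h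
  · rw [decide_eq_false (not_le.mpr h)]
    refine ⟨show z ∈ Icc 0 (f0 1) from ⟨hz.1, h.le.trans S.hq2.le⟩, ?_⟩
    show Tplus g0 g1 q z = g0 z
    simp only [Tplus, if_pos h]
  · rw [decide_eq_true h]
    refine ⟨show z ∈ Icc (f1 0) 1 from ⟨(lt_of_lt_of_le S.hq1 h).le, hz.2⟩, ?_⟩
    show Tplus g0 g1 q z = g1 z
    simp only [Tplus, if_neg (not_lt.mpr h)]

lemma Setup.Tminus_mem (S : Setup f0 f1 g0 g1 q c) (hI : Inv f0 f1 g0 g1) {x : ℝ}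
    (hx : x ∈ Icc (0:ℝ) 1) : Tminus g0 g1 q x ∈ Icc (0:ℝ) 1 := by
  obtain ⟨h1, h2⟩ := S.Tminus_step hx
  rw [h2]
  exact (S.ginv hI _ h1).1

lemma Setup.Tplus_mem (S : Setup f0 f1 g0 g1 q c) (hI : Inv f0 f1 g0 g1) {x : ℝ}
    (hx : x ∈ Icc (0:ℝ) 1) : Tplus g0 g1 q x ∈ Icc (0:ℝ) 1 := by
  obtain ⟨h1, h2⟩ := S.Tplus_step hx
  rw [h2]
  exact (S.ginv hI _ h1).1

lemma Setup.iterm (S : Setup f0 f1 g0 g1 q c) (hI : Inv f0 f1 g0 g1) (n : ℕ) {x : ℝ}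
    (hx : x ∈ Icc (0:ℝ) 1) : (Tminus g0 g1 q)^[n] x ∈ Icc (0:ℝ) 1 := by
  induction n with
  | zero => exact hx
  | succ n ih => rw [Function.iterate_succ_apply']; exact S.Tminus_mem hI ih

lemma Setup.iterp (S : Setup f0 f1 g0 g1 q c) (hI : Inv f0 f1 g0 g1) (n : ℕ) {x : ℝ}
    (hx : x ∈ Icc (0:ℝ) 1) : (Tplus g0 g1 q)^[n] x ∈ Icc (0:ℝ) 1 := by
  induction n with
  | zero => exact hx
  | succ n ih => rw [Function.iterate_succ_apply']; exact S.Tplus_mem hI ih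

end OGIFS

namespace OGIFS

variable {f0 f1 g0 g1 : ℝ → ℝ} {q c : ℝ}

/-- Core orbit comparison lemma. -/
lemma Setup.compare (S : Setup f0 f1 g0 g1 q c) (hI : Inv f0 f1 g0 g1)
    (u v : ℕ → ℝ) (s : ℕ → Bool) (K : ℕ)
    (hu : ∀ j < K, u j ∈ dom f0 f1 (s j) ∧ u (j+1) = cond (s j) g1 g0 (u j))
    (hv : ∀ j < K, v j ∈ dom f0 f1 (s j) ∧ v (j+1) = cond (s j) g1 g0 (v j))
    (h0 : u 0 ≤ v 0) :
    ∀ j, j ≤ K → u j ≤ v j ∧ v 0 - u 0 ≤ c ^ j * (v j - u j) := by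
  intro j
  induction j with
  | zero => intro _; exact ⟨h0, by simp⟩
  | succ j ih =>
    intro hj
    have hjK : j < K := lt_of_lt_of_le (Nat.lt_succ_self j) hj
    obtain ⟨hle, hd⟩ := ih hjK.le
    obtain ⟨hudom, hurec⟩ := hu j hjK
    obtain ⟨hvdom, hvrec⟩ := hv j hjK
    have hmono : cond (s j) g1 g0 (u j) ≤ cond (s j) g1 g0 (v j) := S.gmono hI _ hudom hvdom hle
    have hexp : |u j - v j| ≤ c * |cond (s j) g1 g0 (u j) - cond (s j) g1 g0 (v j)| :=
      S.gexp hI _ hudom hvdom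
    rw [abs_sub_comm (u j), abs_sub_comm (cond (s j) g1 g0 (u j)),
      abs_of_nonneg (sub_nonneg.2 hle), abs_of_nonneg (sub_nonneg.2 hmono)] at hexp
    rw [hurec, hvrec]
    refine ⟨hmono, ?_⟩
    calc v 0 - u 0 ≤ c ^ j * (v j - u j) := hd
      _ ≤ c ^ j * (c * (cond (s j) g1 g0 (v j) - cond (s j) g1 g0 (u j))) :=
        mul_le_mul_of_nonneg_left hexp (pow_nonneg S.hc0 j)
      _ = c ^ (j+1) * (cond (s j) g1 g0 (v j) - cond (s j) g1 g0 (u j)) := by ring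

lemma Setup.orbitMinus (S : Setup f0 f1 g0 g1 q c) (hI : Inv f0 f1 g0 g1) {x : ℝ}
    (hx : x ∈ Icc (0:ℝ) 1) (K : ℕ) :
    ∀ j < K, (Tminus g0 g1 q)^[j] x ∈ dom f0 f1 (tauMinus g0 g1 q x j) ∧
      (Tminus g0 g1 q)^[j+1] x = cond (tauMinus g0 g1 q x j) g1 g0 ((Tminus g0 g1 q)^[j] x) := by
  intro j _
  have hmem := S.iterm hI j hx
  obtain ⟨h1, h2⟩ := S.Tminus_step hmem
  exact ⟨h1, by rw [Function.iterate_succ_apply']; exact h2⟩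

lemma Setup.orbitPlus (S : Setup f0 f1 g0 g1 q c) (hI : Inv f0 f1 g0 g1) {x : ℝ}
    (hx : x ∈ Icc (0:ℝ) 1) (K : ℕ) :
    ∀ j < K, (Tplus g0 g1 q)^[j] x ∈ dom f0 f1 (tauPlus g0 g1 q x j) ∧
      (Tplus g0 g1 q)^[j+1] x = cond (tauPlus g0 g1 q x j) g1 g0 ((Tplus g0 g1 q)^[j] x) := by
  intro j _
  have hmem := S.iterp hI j hx
  obtain ⟨h1, h2⟩ := S.Tplus_step hmem
  exact ⟨h1, by rw [Function.iterate_succ_apply']; exact h2⟩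

/-- `x < y` implies `τ⁺(x) < τ⁻(y)` lexicographically. -/
lemma Setup.tp_lt_tm (S : Setup f0 f1 g0 g1 q c) (hI : Inv f0 f1 g0 g1) {x y : ℝ}
    (hx : x ∈ Icc (0:ℝ) 1) (hy : y ∈ Icc (0:ℝ) 1) (hxy : x < y) :
    lexLt (tauPlus g0 g1 q x) (tauMinus g0 g1 q y) := by
  have key : ∀ K, (∀ j < K, tauPlus g0 g1 q x j = tauMinus g0 g1 q y j) →
      ∀ j ≤ K, (Tplus g0 g1 q)^[j] x ≤ (Tminus g0 g1 q)^[j] y ∧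
        y - x ≤ c ^ j * ((Tminus g0 g1 q)^[j] y - (Tplus g0 g1 q)^[j] x) := by
    intro K hagree
    have hv : ∀ j < K, (Tminus g0 g1 q)^[j] y ∈ dom f0 f1 (tauPlus g0 g1 q x j) ∧
        (Tminus g0 g1 q)^[j+1] y = cond (tauPlus g0 g1 q x j) g1 g0 ((Tminus g0 g1 q)^[j] y) := by
      intro j hj
      rw [hagree j hj]
      exact S.orbitMinus hI hy K j hj
    exact S.compare hI _ _ _ K (S.orbitPlus hI hx K) hv hxy.le
  have hne : tauPlus g0 g1 q x ≠ tauMinus g0 g1 q y := by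
    intro he
    have hb : ∀ K : ℕ, y - x ≤ c ^ K := by
      intro K
      have h2 := (key K (fun j _ => congrFun he j) K le_rfl).2
      have hmx := S.iterp hI K hx
      have hmy := S.iterm hI K hy
      have hsub : (Tminus g0 g1 q)^[K] y - (Tplus g0 g1 q)^[K] x ≤ 1 := by
        have := hmx.1; have := hmy.2; linarith
      calc y - x ≤ c ^ K * ((Tminus g0 g1 q)^[K] y - (Tplus g0 g1 q)^[K] x) := h2
        _ ≤ c ^ K * 1 := mul_le_mul_of_nonneg_left hsub (pow_nonneg S.hc0 K)
        _ = c ^ K := mul_one _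
    have : y - x ≤ 0 :=
      ge_of_tendsto' (tendsto_pow_atTop_nhds_zero_of_lt_one S.hc0 S.hc1) hb
    linarith
  obtain ⟨k0, hk0⟩ := Function.ne_iff.mp hne
  have hex : ∃ k, tauPlus g0 g1 q x k ≠ tauMinus g0 g1 q y k := ⟨k0, hk0⟩
  have hkne := Nat.find_spec hex
  have hagree : ∀ j < Nat.find hex, tauPlus g0 g1 q x j = tauMinus g0 g1 q y j :=
    fun j hj => not_not.mp (Nat.find_min hex hj)
  obtain ⟨hle, hd⟩ := key (Nat.find hex) hagree (Nat.find hex) le_rfl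
  have hpos : 0 < (Tminus g0 g1 q)^[Nat.find hex] y - (Tplus g0 g1 q)^[Nat.find hex] x := by
    by_contra h
    push_neg at h
    have h1 : c ^ (Nat.find hex) * ((Tminus g0 g1 q)^[Nat.find hex] y - (Tplus g0 g1 q)^[Nat.find hex] x) ≤ 0 :=
      mul_nonpos_of_nonneg_of_nonpos (pow_nonneg S.hc0 _) h
    linarith
  have h1 : tauPlus g0 g1 q x (Nat.find hex) = false := by
    cases hc : tauPlus g0 g1 q x (Nat.find hex)
    · rfl
    · exfalso
      apply hkne
      rw [hc]
      rw [tauPlus_def] at hc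
      have hq1 : q ≤ (Tplus g0 g1 q)^[Nat.find hex] x := of_decide_eq_true hc
      have hq2 : q < (Tminus g0 g1 q)^[Nat.find hex] y := by linarith
      rw [tauMinus_def]
      exact (decide_eq_true hq2).symm
  have h2 : tauMinus g0 g1 q y (Nat.find hex) = true := by
    cases hc : tauMinus g0 g1 q y (Nat.find hex)
    · exact absurd (h1.trans hc.symm) hkne
    · rfl
  exact ⟨Nat.find hex, hagree, by rw [h1, h2]; exact (by decide : (false : Bool) < true)⟩

/-- `τ⁻(x) ≤ τ⁺(x)` lexicographically. -/
lemma Setup.tm_le_tp (S : Setup f0 f1 g0 g1 q c) (hI : Inv f0 f1 g0 g1) {x : ℝ}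
    (hx : x ∈ Icc (0:ℝ) 1) :
    lexLe (tauMinus g0 g1 q x) (tauPlus g0 g1 q x) := by
  by_cases he : tauMinus g0 g1 q x = tauPlus g0 g1 q x
  · exact Or.inr he
  left
  obtain ⟨k0, hk0⟩ := Function.ne_iff.mp he
  have hex : ∃ k, tauMinus g0 g1 q x k ≠ tauPlus g0 g1 q x k := ⟨k0, hk0⟩
  have hkne := Nat.find_spec hex
  have hagree : ∀ j < Nat.find hex, tauMinus g0 g1 q x j = tauPlus g0 g1 q x j :=
    fun j hj => not_not.mp (Nat.find_min hex hj)
  have horb : ∀ j ≤ Nat.find hex, (Tminus g0 g1 q)^[j] x = (Tplus g0 g1 q)^[j] x := by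
    intro j hj
    induction j with
    | zero => rfl
    | succ j ih =>
      have hj' : j < Nat.find hex := lt_of_lt_of_le (Nat.lt_succ_self j) hj
      have heq := ih hj'.le
      have hz : (Tplus g0 g1 q)^[j] x ∈ Icc (0:ℝ) 1 := S.iterp hI j hx
      have hsym : decide (q < (Tplus g0 g1 q)^[j] x) = decide (q ≤ (Tplus g0 g1 q)^[j] x) := by
        have h := hagree j hj'
        rw [tauMinus_def, tauPlus_def, heq] at h
        exact h
      rw [Function.iterate_succ_apply', Function.iterate_succ_apply', heq,
        (S.Tminus_step hz).2, (S.Tplus_step hz).2, hsym]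
  have heqk := horb (Nat.find hex) le_rfl
  have hzq : (Tplus g0 g1 q)^[Nat.find hex] x = q := by
    by_contra hne
    rcases lt_or_gt_of_ne hne with h | h
    · apply hkne
      rw [tauMinus_def, tauPlus_def, heqk]
      rw [decide_eq_false (not_lt.mpr h.le), decide_eq_false (not_le.mpr h)]
    · apply hkne
      rw [tauMinus_def, tauPlus_def, heqk]
      rw [decide_eq_true h, decide_eq_true h.le]
  refine ⟨Nat.find hex, hagree, ?_⟩
  rw [tauMinus_def, tauPlus_def, heqk, hzq]
  rw [decide_eq_false (lt_irrefl q), decide_eq_true (le_refl q)]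
  exact (by decide : (false : Bool) < true)

lemma Setup.tm_mono (S : Setup f0 f1 g0 g1 q c) (hI : Inv f0 f1 g0 g1) {x y : ℝ}
    (hx : x ∈ Icc (0:ℝ) 1) (hy : y ∈ Icc (0:ℝ) 1) (h : x ≤ y) :
    lexLe (tauMinus g0 g1 q x) (tauMinus g0 g1 q y) := by
  rcases eq_or_lt_of_le h with rfl | hlt
  · exact Or.inr rfl
  · exact Or.inl (OGIFS.lexLe_trans_lt (S.tm_le_tp hI hx) (S.tp_lt_tm hI hx hy hlt))

end OGIFS

namespace OGIFS

variable {f0 f1 g0 g1 : ℝ → ℝ} {q c : ℝ}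

lemma word_shift (u0 u1 : ℝ → ℝ) (σ : ℕ → Bool) :
    ∀ k x, wordMap u0 u1 σ (k+1) x = cond (σ 0) u1 u0 (wordMap u0 u1 (shiftn 1 σ) k x) := by
  intro k
  induction k with
  | zero => intro x; rfl
  | succ k ih =>
    intro x
    have h1 : wordMap u0 u1 σ (k+2) x = wordMap u0 u1 σ (k+1) (cond (σ (k+2)) u1 u0 x) := rfl
    rw [h1, ih]
    rfl

lemma Setup.word_mem (S : Setup f0 f1 g0 g1 q c) (σ : ℕ → Bool) :
    ∀ k, ∀ x ∈ Icc (0:ℝ) 1, wordMap f0 f1 σ k x ∈ Icc (0:ℝ) 1 := by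
  intro k
  induction k with
  | zero => intro x hx; exact S.Fmem (σ 0) hx
  | succ k ih => intro x hx; exact ih _ (S.Fmem (σ (k+1)) hx)

lemma Setup.word_lip (S : Setup f0 f1 g0 g1 q c) (σ : ℕ → Bool) :
    ∀ k, ∀ x ∈ Icc (0:ℝ) 1, ∀ y ∈ Icc (0:ℝ) 1,
      |wordMap f0 f1 σ k x - wordMap f0 f1 σ k y| ≤ c ^ (k+1) * |x - y| := by
  intro k
  induction k with
  | zero =>
    intro x hx y hy
    have := S.Flip (σ 0) x hx y hy
    rw [pow_one]
    exact this
  | succ k ih =>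
    intro x hx y hy
    have h1 := ih _ (S.Fmem (σ (k+1)) hx) _ (S.Fmem (σ (k+1)) hy)
    have h2 := S.Flip (σ (k+1)) x hx y hy
    calc |wordMap f0 f1 σ (k+1) x - wordMap f0 f1 σ (k+1) y|
        = |wordMap f0 f1 σ k (cond (σ (k+1)) f1 f0 x) - wordMap f0 f1 σ k (cond (σ (k+1)) f1 f0 y)| := rfl
      _ ≤ c ^ (k+1) * |cond (σ (k+1)) f1 f0 x - cond (σ (k+1)) f1 f0 y| := h1
      _ ≤ c ^ (k+1) * (c * |x - y|) := mul_le_mul_of_nonneg_left h2 (pow_nonneg S.hc0 _)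
      _ = c ^ (k+1+1) * |x - y| := by ring

lemma Setup.pi_tendsto (S : Setup f0 f1 g0 g1 q c) (σ : ℕ → Bool) :
    Tendsto (fun k => wordMap f0 f1 σ k 0) atTop (𝓝 (piCode f0 f1 σ)) := by
  have h01 : (0:ℝ) ∈ Icc (0:ℝ) 1 := ⟨le_refl 0, zero_le_one⟩
  have hcs : CauchySeq (fun k => wordMap f0 f1 σ k 0) := by
    apply cauchySeq_of_le_geometric c c S.hc1
    intro k
    have hmem := S.Fmem (σ (k+1)) h01
    have h1 : wordMap f0 f1 σ (k+1) 0 = wordMap f0 f1 σ k (cond (σ (k+1)) f1 f0 0) := rfl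
    rw [Real.dist_eq, h1]
    calc |wordMap f0 f1 σ k 0 - wordMap f0 f1 σ k (cond (σ (k+1)) f1 f0 0)|
        ≤ c ^ (k+1) * |0 - cond (σ (k+1)) f1 f0 0| := S.word_lip σ k 0 h01 _ hmem
      _ ≤ c ^ (k+1) * 1 := by
          apply mul_le_mul_of_nonneg_left _ (pow_nonneg S.hc0 _)
          rw [zero_sub, abs_neg, abs_of_nonneg hmem.1]
          exact hmem.2
      _ = c * c ^ k := by ring
  obtain ⟨l, hl⟩ := cauchySeq_tendsto_of_complete hcs
  have heq : piCode f0 f1 σ = l := by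
    unfold piCode
    exact hl.limUnder_eq
  rw [heq]
  exact hl

lemma Setup.pi_mem (S : Setup f0 f1 g0 g1 q c) (σ : ℕ → Bool) :
    piCode f0 f1 σ ∈ Icc (0:ℝ) 1 :=
  isClosed_Icc.mem_of_tendsto (S.pi_tendsto σ)
    (Eventually.of_forall fun k => S.word_mem σ k 0 ⟨le_refl 0, zero_le_one⟩)

lemma Setup.pi_rec (S : Setup f0 f1 g0 g1 q c) (σ : ℕ → Bool) :
    piCode f0 f1 σ = cond (σ 0) f1 f0 (piCode f0 f1 (shiftn 1 σ)) := by
  have h01 : (0:ℝ) ∈ Icc (0:ℝ) 1 := ⟨le_refl 0, zero_le_one⟩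
  have h1 : Tendsto (fun k => wordMap f0 f1 σ (k+1) 0) atTop (𝓝 (piCode f0 f1 σ)) := by
    have := (S.pi_tendsto σ).comp (tendsto_add_atTop_nat 1)
    exact this
  have hcont : ContinuousOn (cond (σ 0) f1 f0) (Icc 0 1) := by
    cases hb : σ 0
    · exact S.co0
    · exact S.co1
  have hwithin : Tendsto (fun k => wordMap f0 f1 (shiftn 1 σ) k 0) atTop
      (𝓝[Icc (0:ℝ) 1] (piCode f0 f1 (shiftn 1 σ))) :=
    tendsto_nhdsWithin_of_tendsto_nhds_of_eventually_within _ (S.pi_tendsto _)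
      (Eventually.of_forall fun k => S.word_mem _ k 0 h01)
  have h2 : Tendsto (fun k => cond (σ 0) f1 f0 (wordMap f0 f1 (shiftn 1 σ) k 0)) atTop
      (𝓝 (cond (σ 0) f1 f0 (piCode f0 f1 (shiftn 1 σ)))) :=
    (hcont _ (S.pi_mem _)).tendsto.comp hwithin
  have h3 : (fun k => wordMap f0 f1 σ (k+1) 0)
      = fun k => cond (σ 0) f1 f0 (wordMap f0 f1 (shiftn 1 σ) k 0) :=
    funext fun k => word_shift f0 f1 σ k 0
  rw [h3] at h1
  exact tendsto_nhds_unique h1 h2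

lemma Setup.F_T (S : Setup f0 f1 g0 g1 q c) (hI : Inv f0 f1 g0 g1) {x : ℝ}
    (hx : x ∈ Icc (0:ℝ) 1) :
    cond (decide (q < x)) f1 f0 (Tminus g0 g1 q x) = x := by
  obtain ⟨h1, h2⟩ := S.Tminus_step hx
  rw [h2]
  exact (S.ginv hI _ h1).2

lemma Setup.word_tau (S : Setup f0 f1 g0 g1 q c) (hI : Inv f0 f1 g0 g1) :
    ∀ k, ∀ x ∈ Icc (0:ℝ) 1,
      wordMap f0 f1 (tauMinus g0 g1 q x) k ((Tminus g0 g1 q)^[k+1] x) = x := by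
  intro k
  induction k with
  | zero =>
    intro x hx
    show cond (tauMinus g0 g1 q x 0) f1 f0 ((Tminus g0 g1 q)^[1] x) = x
    have h0 : tauMinus g0 g1 q x 0 = decide (q < x) := rfl
    have h1 : (Tminus g0 g1 q)^[1] x = Tminus g0 g1 q x := Function.iterate_one _ ▸ rfl
    rw [h0, h1]
    exact S.F_T hI hx
  | succ k ih =>
    intro x hx
    rw [word_shift, tauMinus_shift1,
      show (Tminus g0 g1 q)^[k+1+1] x = (Tminus g0 g1 q)^[k+1] (Tminus g0 g1 q x) from
        Function.iterate_succ_apply _ _ _,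
      ih _ (S.Tminus_mem hI hx)]
    have h0 : tauMinus g0 g1 q x 0 = decide (q < x) := rfl
    rw [h0]
    exact S.F_T hI hx

lemma Setup.pi_tau (S : Setup f0 f1 g0 g1 q c) (hI : Inv f0 f1 g0 g1) {x : ℝ}
    (hx : x ∈ Icc (0:ℝ) 1) : piCode f0 f1 (tauMinus g0 g1 q x) = x := by
  have h01 : (0:ℝ) ∈ Icc (0:ℝ) 1 := ⟨le_refl 0, zero_le_one⟩
  have hb : ∀ k, |wordMap f0 f1 (tauMinus g0 g1 q x) k 0 - x| ≤ c ^ (k+1) := by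
    intro k
    have hit : (Tminus g0 g1 q)^[k+1] x ∈ Icc (0:ℝ) 1 := S.iterm hI (k+1) hx
    have h := S.word_lip (tauMinus g0 g1 q x) k 0 h01 _ hit
    rw [S.word_tau hI k x hx] at h
    calc |wordMap f0 f1 (tauMinus g0 g1 q x) k 0 - x|
        ≤ c ^ (k+1) * |0 - (Tminus g0 g1 q)^[k+1] x| := h
      _ ≤ c ^ (k+1) * 1 := by
          apply mul_le_mul_of_nonneg_left _ (pow_nonneg S.hc0 _)
          rw [zero_sub, abs_neg, abs_of_nonneg hit.1]
          exact hit.2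
      _ = c ^ (k+1) := mul_one _
  have ht : Tendsto (fun k => wordMap f0 f1 (tauMinus g0 g1 q x) k 0) atTop (𝓝 x) := by
    rw [tendsto_iff_dist_tendsto_zero]
    refine squeeze_zero (g := fun k => c ^ (k+1)) (fun k => dist_nonneg) (fun k => ?_) ?_
    · rw [Real.dist_eq]; exact hb k
    · exact (tendsto_pow_atTop_nhds_zero_of_lt_one S.hc0 S.hc1).comp (tendsto_add_atTop_nat 1)
  exact tendsto_nhds_unique (S.pi_tendsto _) ht

end OGIFS

/-- Characterization of the minus address space:
`Ω_q^- = { ω : ∀ n, Sⁿω ∈ [0̄,α] ∪ (β,1̄] }`. -/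
theorem stmt4
    (f0 f1 g0 g1 : ℝ → ℝ) (q : ℝ)
    (hf0m : StrictMonoOn f0 (Icc 0 1)) (hf1m : StrictMonoOn f1 (Icc 0 1))
    (hf0c : ContinuousOn f0 (Icc 0 1)) (hf1c : ContinuousOn f1 (Icc 0 1))
    (hf0map : MapsTo f0 (Icc 0 1) (Icc 0 1)) (hf1map : MapsTo f1 (Icc 0 1) (Icc 0 1))
    (hf0lip : ∃ c, 0 ≤ c ∧ c < 1 ∧ ∀ x ∈ Icc (0:ℝ) 1, ∀ y ∈ Icc (0:ℝ) 1, |f0 x - f0 y| ≤ c * |x - y|)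
    (hf1lip : ∃ c, 0 ≤ c ∧ c < 1 ∧ ∀ x ∈ Icc (0:ℝ) 1, ∀ y ∈ Icc (0:ℝ) 1, |f1 x - f1 y| ≤ c * |x - y|)
    (hf00 : f0 0 = 0) (hf11 : f1 1 = 1)
    (hf10pos : 0 < f1 0) (hoverf0f1 : f1 0 < f0 1) (hf01lt : f0 1 < 1)
    (hq : q ∈ Ioo (f1 0) (f0 1))
    (hg0 : ∀ x ∈ Icc (0:ℝ) 1, g0 (f0 x) = x) (hg1 : ∀ x ∈ Icc (0:ℝ) 1, g1 (f1 x) = x) :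
    tauMinus g0 g1 q '' (Icc 0 1) =
      {ω : ℕ → Bool | ∀ n : ℕ,
        lexLe (shiftn n ω) (tauMinus g0 g1 q q) ∨ lexLt (tauPlus g0 g1 q q) (shiftn n ω)} := by
  classical
  obtain ⟨ca, hca0, hca1, hlipa⟩ := hf0lip
  obtain ⟨cb, hcb0, hcb1, hlipb⟩ := hf1lip
  set c : ℝ := max ca cb with hcdef
  have hc0 : 0 ≤ c := le_trans hca0 (le_max_left _ _)
  have hc1 : c < 1 := max_lt hca1 hcb1
  have S : OGIFS.Setup f0 f1 g0 g1 q c :=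
    { m0 := hf0m, m1 := hf1m, co0 := hf0c, co1 := hf1c, map0 := hf0map, map1 := hf1map
      hc0 := hc0, hc1 := hc1
      lip0 := fun x hx y hy => le_trans (hlipa x hx y hy)
        (mul_le_mul_of_nonneg_right (le_max_left _ _) (abs_nonneg _))
      lip1 := fun x hx y hy => le_trans (hlipb x hx y hy)
        (mul_le_mul_of_nonneg_right (le_max_right _ _) (abs_nonneg _))
      e00 := hf00, e11 := hf11, pos10 := hf10pos, hq1 := hq.1, hq2 := hq.2, lt1 := hf01lt }
  have hI : OGIFS.Inv f0 f1 g0 g1 := ⟨hg0, hg1⟩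
  have hq01 : q ∈ Icc (0:ℝ) 1 := S.q01
  have hα0 : tauMinus g0 g1 q q 0 = false := by
    rw [OGIFS.tauMinus_def]
    exact decide_eq_false (lt_irrefl q)
  have hβ0 : tauPlus g0 g1 q q 0 = true := by
    rw [OGIFS.tauPlus_def]
    exact decide_eq_true (le_refl q)
  apply Set.Subset.antisymm
  · -- forward inclusion
    rintro ω ⟨x, hx, rfl⟩
    simp only [Set.mem_setOf_eq]
    intro n
    rw [OGIFS.tauMinus_shiftn]
    have hmem : (Tminus g0 g1 q)^[n] x ∈ Icc (0:ℝ) 1 := S.iterm hI n hx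
    rcases le_or_gt ((Tminus g0 g1 q)^[n] x) q with h | h
    · exact Or.inl (S.tm_mono hI hmem hq01 h)
    · exact Or.inr (S.tp_lt_tm hI hq01 hmem h)
  · -- backward inclusion
    intro ω hω
    simp only [Set.mem_setOf_eq] at hω
    obtain ⟨x, hxdef⟩ : ∃ x : ℕ → ℝ, x = fun n => piCode f0 f1 (shiftn n ω) := ⟨_, rfl⟩
    have hxmem : ∀ n, x n ∈ Icc (0:ℝ) 1 := by
      intro n; rw [hxdef]; exact S.pi_mem _
    have hshift1 : ∀ n : ℕ, shiftn 1 (shiftn n ω) = shiftn (n+1) ω := by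
      intro n; funext k
      show ω (k + 1 + n) = ω (k + (n + 1))
      congr 1; ring
    have hrec : ∀ n, x n = cond (ω n) f1 f0 (x (n+1)) := by
      intro n
      rw [hxdef]
      simp only []
      have h := S.pi_rec (shiftn n ω)
      rw [hshift1 n] at h
      have h0 : shiftn n ω 0 = ω n := by show ω (0 + n) = ω n; rw [Nat.zero_add]
      rw [h0] at h
      exact h
    -- one round of the expansion argument
    have hround : ∀ n, ((ω n = false ∧ q < x n) ∨ (ω n = true ∧ x n ≤ q)) →
        ∃ m, ((ω m = false ∧ q < x m) ∨ (ω m = true ∧ x m ≤ q)) ∧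
          0 < |x m - q| ∧ |x n - q| ≤ c * |x m - q| := by
      intro n hbad
      rcases hω n with hA | hB
      · -- case: shiftn n ω ≤ α
        have hωn : ω n = false := by
          cases hb : ω n
          · rfl
          · exfalso
            have h00 : shiftn n ω 0 = ω n := by show ω (0 + n) = ω n; rw [Nat.zero_add]
            rcases hA with ⟨k, hag, hlt⟩ | heq
            · rcases Nat.eq_zero_or_pos k with rfl | hk
              · rw [OGIFS.bool_lt_iff] at hlt
                rw [h00, hb] at hlt
                exact Bool.noConfusion hlt.1
              · have h := hag 0 hk
                rw [h00, hb, hα0] at h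
                exact Bool.noConfusion h
            · have h := congrFun heq 0
              rw [h00, hb, hα0] at h
              exact Bool.noConfusion h
        have hxq : q < x n := by
          rcases hbad with ⟨_, h⟩ | ⟨h, _⟩
          · exact h
          · rw [hωn] at h; exact Bool.noConfusion h
        rcases hA with ⟨k, hag, hlt⟩ | heq
        · -- strict: first difference at k ≥ 1
          rw [OGIFS.bool_lt_iff] at hlt
          have hk0 : 0 < k := by
            rcases Nat.eq_zero_or_pos k with rfl | h
            · exfalso
              have h00 : shiftn n ω 0 = ω n := by show ω (0 + n) = ω n; rw [Nat.zero_add]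
              have := hlt.2
              rw [hα0] at this
              exact Bool.noConfusion this
            · exact h
          have hagree : ∀ j, j < k → ω (j + n) = tauMinus g0 g1 q q j := fun j hj => hag j hj
          have hvfact : ∀ j, j < k → x (j + n) ∈ OGIFS.dom f0 f1 (tauMinus g0 g1 q q j) ∧
              x (j + n + 1) = cond (tauMinus g0 g1 q q j) g1 g0 (x (j + n)) := by
            intro j hj
            have h1 := hrec (j + n)
            rw [hagree j hj] at h1
            constructor
            · rw [h1]; exact S.branch_mem _ (hxmem _)
            · rw [h1, S.FG hI _ (hxmem _)]
          have hcomp := S.compare hI (fun j => (Tminus g0 g1 q)^[j] q) (fun j => x (j + n))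
            (tauMinus g0 g1 q q) k (S.orbitMinus hI hq01 k)
            (by
              intro j hj
              refine ⟨(hvfact j hj).1, ?_⟩
              show x (j + 1 + n) = _
              rw [show j + 1 + n = j + n + 1 by ring]
              exact (hvfact j hj).2)
            (by show q ≤ x (0 + n); rw [Nat.zero_add]; exact hxq.le)
          obtain ⟨hle, hd⟩ := hcomp k le_rfl
          have hωm : ω (k + n) = false := hlt.1
          have hαk : tauMinus g0 g1 q q k = true := hlt.2
          have hqlt : q < (Tminus g0 g1 q)^[k] q := by
            rw [OGIFS.tauMinus_def] at hαk
            exact of_decide_eq_true hαk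
          have hxm : q < x (k + n) := lt_of_lt_of_le hqlt hle
          have hd' : x (0 + n) - q ≤ c ^ k * (x (k + n) - (Tminus g0 g1 q)^[k] q) := hd
          rw [Nat.zero_add] at hd'
          have h3 : c ^ k ≤ c := by
            calc c ^ k ≤ c ^ 1 := pow_le_pow_of_le_one hc0 hc1.le hk0
              _ = c := pow_one c
          refine ⟨k + n, Or.inl ⟨hωm, hxm⟩, ?_, ?_⟩
          · rw [abs_of_pos (sub_pos.mpr hxm)]
            linarith
          · rw [abs_of_pos (sub_pos.mpr hxq), abs_of_pos (sub_pos.mpr hxm)]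
            nlinarith [mul_nonneg (pow_nonneg hc0 k) (sub_nonneg.mpr hqlt.le),
              mul_nonneg (sub_nonneg.mpr h3) (sub_nonneg.mpr hxm.le)]
        · -- equality case: x n = q, contradiction
          exfalso
          have hxn : x n = q := by
            rw [hxdef]
            simp only []
            rw [heq]
            exact S.pi_tau hI hq01
          rw [hxn] at hxq
          exact lt_irrefl q hxq
      · -- case: β < shiftn n ω
        obtain ⟨k, hag, hlt⟩ := hB
        rw [OGIFS.bool_lt_iff] at hlt
        have hk0 : 0 < k := by
          rcases Nat.eq_zero_or_pos k with rfl | h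
          · exfalso
            have := hlt.1
            rw [hβ0] at this
            exact Bool.noConfusion this
          · exact h
        have hωn : ω n = true := by
          have h := hag 0 hk0
          rw [hβ0] at h
          have h' : shiftn n ω 0 = ω n := by show ω (0 + n) = ω n; rw [Nat.zero_add]
          rw [h'] at h
          exact h.symm
        have hxq : x n ≤ q := by
          rcases hbad with ⟨h, _⟩ | ⟨_, h⟩
          · rw [hωn] at h; exact Bool.noConfusion h
          · exact h
        have hagree : ∀ j, j < k → ω (j + n) = tauPlus g0 g1 q q j := by
          intro j hj
          have h := hag j hj
          have h' : shiftn n ω j = ω (j + n) := rfl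
          rw [h'] at h
          exact h.symm
        have hufact : ∀ j, j < k → x (j + n) ∈ OGIFS.dom f0 f1 (tauPlus g0 g1 q q j) ∧
            x (j + n + 1) = cond (tauPlus g0 g1 q q j) g1 g0 (x (j + n)) := by
          intro j hj
          have h1 := hrec (j + n)
          rw [hagree j hj] at h1
          constructor
          · rw [h1]; exact S.branch_mem _ (hxmem _)
          · rw [h1, S.FG hI _ (hxmem _)]
        have hcomp := S.compare hI (fun j => x (j + n)) (fun j => (Tplus g0 g1 q)^[j] q)
          (tauPlus g0 g1 q q) k
          (by
            intro j hj
            refine ⟨(hufact j hj).1, ?_⟩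
            show x (j + 1 + n) = _
            rw [show j + 1 + n = j + n + 1 by ring]
            exact (hufact j hj).2)
          (S.orbitPlus hI hq01 k)
          (by show x (0 + n) ≤ q; rw [Nat.zero_add]; exact hxq)
        obtain ⟨hle, hd⟩ := hcomp k le_rfl
        have hωm : ω (k + n) = true := hlt.2
        have hβk : tauPlus g0 g1 q q k = false := hlt.1
        have hzk : (Tplus g0 g1 q)^[k] q < q := by
          rw [OGIFS.tauPlus_def] at hβk
          exact not_le.mp (of_decide_eq_false hβk)
        have hxm : x (k + n) < q := lt_of_le_of_lt hle hzk
        have hd' : (Tplus g0 g1 q)^[0] q - x (0 + n) ≤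
            c ^ k * ((Tplus g0 g1 q)^[k] q - x (k + n)) := hd
        rw [Nat.zero_add] at hd'
        have hd'' : q - x n ≤ c ^ k * ((Tplus g0 g1 q)^[k] q - x (k + n)) := hd'
        have h3 : c ^ k ≤ c := by
          calc c ^ k ≤ c ^ 1 := pow_le_pow_of_le_one hc0 hc1.le hk0
            _ = c := pow_one c
        refine ⟨k + n, Or.inr ⟨hωm, hxm.le⟩, ?_, ?_⟩
        · rw [abs_of_neg (sub_neg.mpr hxm)]
          linarith
        · rw [abs_of_nonpos (sub_nonpos.mpr hxq), abs_of_neg (sub_neg.mpr hxm)]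
          nlinarith [mul_nonneg (pow_nonneg hc0 k) (sub_nonneg.mpr hzk.le),
            mul_nonneg (sub_nonneg.mpr h3) (sub_nonneg.mpr (sub_nonneg.mpr hxm.le))]
    -- iterate the round lemma to a contradiction
    have habs1 : ∀ n, |x n - q| ≤ 1 := by
      intro n
      have h1 := hxmem n
      rw [abs_sub_le_iff]
      constructor
      · linarith [h1.2, hq01.1]
      · linarith [h1.1, hq01.2]
    have hnotbad : ∀ n, ¬((ω n = false ∧ q < x n) ∨ (ω n = true ∧ x n ≤ q)) := by
      intro n hbad
      obtain ⟨m, hbadm, hpos, _⟩ := hround n hbad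
      have hchain : ∀ i : ℕ, ∃ m', ((ω m' = false ∧ q < x m') ∨ (ω m' = true ∧ x m' ≤ q)) ∧
          |x m - q| ≤ c ^ i * |x m' - q| := by
        intro i
        induction i with
        | zero => exact ⟨m, hbadm, by rw [pow_zero, one_mul]⟩
        | succ i ih =>
          obtain ⟨m', hb', hineq⟩ := ih
          obtain ⟨m'', hb'', _, hineq''⟩ := hround m' hb'
          refine ⟨m'', hb'', ?_⟩
          calc |x m - q| ≤ c ^ i * |x m' - q| := hineq
            _ ≤ c ^ i * (c * |x m'' - q|) := mul_le_mul_of_nonneg_left hineq'' (pow_nonneg hc0 _)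
            _ = c ^ (i+1) * |x m'' - q| := by ring
      have hle : ∀ i : ℕ, |x m - q| ≤ c ^ i := by
        intro i
        obtain ⟨m', _, hineq⟩ := hchain i
        calc |x m - q| ≤ c ^ i * |x m' - q| := hineq
          _ ≤ c ^ i * 1 := mul_le_mul_of_nonneg_left (habs1 m') (pow_nonneg hc0 _)
          _ = c ^ i := mul_one _
      have hfin : |x m - q| ≤ 0 :=
        ge_of_tendsto' (tendsto_pow_atTop_nhds_zero_of_lt_one hc0 hc1) hle
      linarith
    have hsym : ∀ n, ω n = decide (q < x n) := by
      intro n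
      cases hb : ω n
      · have h1 : ¬ q < x n := fun h => (hnotbad n) (Or.inl ⟨hb, h⟩)
        exact (decide_eq_false h1).symm
      · have h1 : ¬ x n ≤ q := fun h => (hnotbad n) (Or.inr ⟨hb, h⟩)
        exact (decide_eq_true (not_le.mp h1)).symm
    have hT : ∀ n, Tminus g0 g1 q (x n) = x (n + 1) := by
      intro n
      rw [(S.Tminus_step (hxmem n)).2, ← hsym n, hrec n, S.FG hI _ (hxmem _)]
    have hiterx : ∀ n, (Tminus g0 g1 q)^[n] (x 0) = x n := by
      intro n
      induction n with
      | zero => rfl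
      | succ n ih => rw [Function.iterate_succ_apply', ih, hT]
    refine ⟨x 0, hxmem 0, ?_⟩
    funext n
    rw [OGIFS.tauMinus_def, hiterx n, ← hsym n]
end

section
/- For an overlapping masked IFS with mask point q and critical itineraries α = τ_q^-(q), β = τ_q^+(q), the address space of the plus section is exactly Ω_q^+ = { ω ∈ {0,1}^∞ : for all n ≥ 0, S^n(ω) ∈ [0̄, α) ∪ [β, 1̄] } (lexicographic order, S the shift). -/
open Set Filter Topology

/- ### Auxiliary lemmas -/

lemma shiftn_zero (ω : ℕ → Bool) : shiftn 0 ω = ω := funext fun k => by simp [shiftn]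

lemma shiftn_shiftn (a b : ℕ) (ω : ℕ → Bool) : shiftn a (shiftn b ω) = shiftn (a + b) ω :=
  funext fun k => by simp [shiftn, Nat.add_assoc]

/-- Head-first composition of the word maps. -/
def wApply (u0 u1 : ℝ → ℝ) (σ : ℕ → Bool) : ℕ → ℝ → ℝ
  | 0 => id
  | k+1 => fun x => (cond (σ 0) u1 u0) (wApply u0 u1 (shiftn 1 σ) k x)

lemma wApply_congr (u0 u1 : ℝ → ℝ) : ∀ (k : ℕ) (σ τ : ℕ → Bool), (∀ j < k, σ j = τ j) →
    ∀ x, wApply u0 u1 σ k x = wApply u0 u1 τ k x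
  | 0, _, _, _, _ => rfl
  | (k+1), σ, τ, h, x => by
    simp only [wApply]
    rw [h 0 (Nat.succ_pos _), wApply_congr u0 u1 k (shiftn 1 σ) (shiftn 1 τ)
      (fun j hj => h (j+1) (by omega)) x]

lemma wApply_snoc (u0 u1 : ℝ → ℝ) : ∀ (k : ℕ) (σ : ℕ → Bool) (x : ℝ),
    wApply u0 u1 σ k ((cond (σ k) u1 u0) x) = wApply u0 u1 σ (k+1) x
  | 0, _, _ => rfl
  | (k+1), σ, x => by
    simp only [wApply]
    have h : σ (k+1) = (shiftn 1 σ) k := by simp [shiftn]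
    rw [h, wApply_snoc u0 u1 k (shiftn 1 σ) x]
    rfl

lemma wordMap_eq (u0 u1 : ℝ → ℝ) : ∀ (k : ℕ) (σ : ℕ → Bool) (x : ℝ),
    wordMap u0 u1 σ k x = wApply u0 u1 σ (k+1) x
  | 0, _, _ => rfl
  | (k+1), σ, x => by
    show wordMap u0 u1 σ k ((cond (σ (k+1)) u1 u0) x) = _
    rw [wordMap_eq u0 u1 k σ _, wApply_snoc]

lemma blt : ∀ {a b : Bool}, a < b → a = false ∧ b = true := by decide

/-- Characterization of the plus address space:
`Ω_q^+ = { ω : ∀ n, Sⁿω ∈ [0̄,α) ∪ [β,1̄] }`. -/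
theorem stmt5
    (f0 f1 g0 g1 : ℝ → ℝ) (q : ℝ)
    (hf0m : StrictMonoOn f0 (Icc 0 1)) (hf1m : StrictMonoOn f1 (Icc 0 1))
    (hf0c : ContinuousOn f0 (Icc 0 1)) (hf1c : ContinuousOn f1 (Icc 0 1))
    (hf0map : MapsTo f0 (Icc 0 1) (Icc 0 1)) (hf1map : MapsTo f1 (Icc 0 1) (Icc 0 1))
    (hf0lip : ∃ c, 0 ≤ c ∧ c < 1 ∧ ∀ x ∈ Icc (0:ℝ) 1, ∀ y ∈ Icc (0:ℝ) 1, |f0 x - f0 y| ≤ c * |x - y|)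
    (hf1lip : ∃ c, 0 ≤ c ∧ c < 1 ∧ ∀ x ∈ Icc (0:ℝ) 1, ∀ y ∈ Icc (0:ℝ) 1, |f1 x - f1 y| ≤ c * |x - y|)
    (hf00 : f0 0 = 0) (hf11 : f1 1 = 1)
    (hf10pos : 0 < f1 0) (hoverf0f1 : f1 0 < f0 1) (hf01lt : f0 1 < 1)
    (hq : q ∈ Ioo (f1 0) (f0 1))
    (hg0 : ∀ x ∈ Icc (0:ℝ) 1, g0 (f0 x) = x) (hg1 : ∀ x ∈ Icc (0:ℝ) 1, g1 (f1 x) = x) :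
    tauPlus g0 g1 q '' (Icc 0 1) =
      {ω : ℕ → Bool | ∀ n : ℕ,
        lexLt (shiftn n ω) (tauMinus g0 g1 q q) ∨ lexLe (tauPlus g0 g1 q q) (shiftn n ω)} := by
  classical
  obtain ⟨c0, hc0n, hc0l, hlip0⟩ := hf0lip
  obtain ⟨c1, hc1n, hc1l, hlip1⟩ := hf1lip
  set c : ℝ := max (max c0 c1) (1/2) with hcdef
  have hcpos : (0:ℝ) < c := lt_of_lt_of_le (by norm_num) (le_max_right _ _)
  have hclt : c < 1 := by
    apply max_lt (max_lt hc0l hc1l) (by norm_num)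
  have lip0 : ∀ x ∈ Icc (0:ℝ) 1, ∀ y ∈ Icc (0:ℝ) 1, |f0 x - f0 y| ≤ c * |x - y| := by
    intro x hx y hy
    exact le_trans (hlip0 x hx y hy)
      (mul_le_mul_of_nonneg_right (le_trans (le_max_left _ _) (le_max_left _ _)) (abs_nonneg _))
  have lip1 : ∀ x ∈ Icc (0:ℝ) 1, ∀ y ∈ Icc (0:ℝ) 1, |f1 x - f1 y| ≤ c * |x - y| := by
    intro x hx y hy
    exact le_trans (hlip1 x hx y hy)
      (mul_le_mul_of_nonneg_right (le_trans (le_max_right _ _) (le_max_left _ _)) (abs_nonneg _))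
  have hq0 : 0 < q := lt_trans hf10pos hq.1
  have hq1 : q < 1 := lt_trans hq.2 hf01lt
  have hqI : q ∈ Icc (0:ℝ) 1 := ⟨hq0.le, hq1.le⟩
  have I0 : (0:ℝ) ∈ Icc (0:ℝ) 1 := ⟨le_refl _, zero_le_one⟩
  have I1 : (1:ℝ) ∈ Icc (0:ℝ) 1 := ⟨zero_le_one, le_refl _⟩
  -- branch inverses
  have hg0' : ∀ y : ℝ, 0 ≤ y → y ≤ f0 1 → g0 y ∈ Icc (0:ℝ) 1 ∧ f0 (g0 y) = y := by
    intro y h0 h1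
    have hmem : y ∈ Icc (f0 0) (f0 1) := by rw [hf00]; exact ⟨h0, h1⟩
    obtain ⟨t, ht, hft⟩ := intermediate_value_Icc zero_le_one hf0c hmem
    have : g0 y = t := by rw [← hft, hg0 t ht]
    rw [this, ← hft]
    exact ⟨ht, rfl⟩
  have hg1' : ∀ y : ℝ, f1 0 ≤ y → y ≤ 1 → g1 y ∈ Icc (0:ℝ) 1 ∧ f1 (g1 y) = y := by
    intro y h0 h1
    have hmem : y ∈ Icc (f1 0) (f1 1) := by rw [hf11]; exact ⟨h0, h1⟩
    obtain ⟨t, ht, hft⟩ := intermediate_value_Icc zero_le_one hf1c hmem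
    have : g1 y = t := by rw [← hft, hg1 t ht]
    rw [this, ← hft]
    exact ⟨ht, rfl⟩
  -- monotonicity of the branch inverses
  have g0le : ∀ u v : ℝ, 0 ≤ u → u ≤ v → v ≤ f0 1 → g0 u ≤ g0 v := by
    intro u v h0 huv h1
    obtain ⟨hmu, hfu⟩ := hg0' u h0 (le_trans huv h1)
    obtain ⟨hmv, hfv⟩ := hg0' v (le_trans h0 huv) h1
    by_contra hcon
    push_neg at hcon
    have := hf0m hmv hmu hcon
    rw [hfu, hfv] at this
    linarith
  have g0lt : ∀ u v : ℝ, 0 ≤ u → u < v → v ≤ f0 1 → g0 u < g0 v := by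
    intro u v h0 huv h1
    obtain ⟨hmu, hfu⟩ := hg0' u h0 (le_trans huv.le h1)
    obtain ⟨hmv, hfv⟩ := hg0' v (le_trans h0 huv.le) h1
    by_contra hcon
    push_neg at hcon
    have := hf0m.monotoneOn hmv hmu hcon
    rw [hfu, hfv] at this
    linarith
  have g1le : ∀ u v : ℝ, f1 0 ≤ u → u ≤ v → v ≤ 1 → g1 u ≤ g1 v := by
    intro u v h0 huv h1
    obtain ⟨hmu, hfu⟩ := hg1' u h0 (le_trans huv h1)
    obtain ⟨hmv, hfv⟩ := hg1' v (le_trans h0 huv) h1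
    by_contra hcon
    push_neg at hcon
    have := hf1m hmv hmu hcon
    rw [hfu, hfv] at this
    linarith
  have g1lt : ∀ u v : ℝ, f1 0 ≤ u → u < v → v ≤ 1 → g1 u < g1 v := by
    intro u v h0 huv h1
    obtain ⟨hmu, hfu⟩ := hg1' u h0 (le_trans huv.le h1)
    obtain ⟨hmv, hfv⟩ := hg1' v (le_trans h0 huv.le) h1
    by_contra hcon
    push_neg at hcon
    have := hf1m.monotoneOn hmv hmu hcon
    rw [hfu, hfv] at this
    linarith
  -- branch rewriting
  have Tlt : ∀ x : ℝ, x < q → Tplus g0 g1 q x = g0 x := fun x h => if_pos h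
  have Tge : ∀ x : ℝ, ¬ x < q → Tplus g0 g1 q x = g1 x := fun x h => if_neg h
  have TmLe : ∀ x : ℝ, x ≤ q → Tminus g0 g1 q x = g0 x := fun x h => if_pos h
  have TmGt : ∀ x : ℝ, ¬ x ≤ q → Tminus g0 g1 q x = g1 x := fun x h => if_neg h
  -- T maps the unit interval into itself
  have Tmem : ∀ x ∈ Icc (0:ℝ) 1, Tplus g0 g1 q x ∈ Icc (0:ℝ) 1 := by
    intro x hx
    by_cases h : x < q
    · rw [Tlt x h]; exact (hg0' x hx.1 (le_trans h.le hq.2.le)).1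
    · rw [Tge x h]; exact (hg1' x (le_trans hq.1.le (not_lt.mp h)) hx.2).1
  have TmMem : ∀ x ∈ Icc (0:ℝ) 1, Tminus g0 g1 q x ∈ Icc (0:ℝ) 1 := by
    intro x hx
    by_cases h : x ≤ q
    · rw [TmLe x h]; exact (hg0' x hx.1 (le_trans h hq.2.le)).1
    · rw [TmGt x h]; exact (hg1' x (le_trans hq.1.le (not_le.mp h).le) hx.2).1
  have Torb : ∀ (n : ℕ) (x : ℝ), x ∈ Icc (0:ℝ) 1 → (Tplus g0 g1 q)^[n] x ∈ Icc (0:ℝ) 1 := by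
    intro n
    induction n with
    | zero => intro x hx; exact hx
    | succ n ih =>
      intro x hx
      rw [Function.iterate_succ_apply']
      exact Tmem _ (ih x hx)
  have TmOrb : ∀ (n : ℕ) (x : ℝ), x ∈ Icc (0:ℝ) 1 → (Tminus g0 g1 q)^[n] x ∈ Icc (0:ℝ) 1 := by
    intro n
    induction n with
    | zero => intro x hx; exact hx
    | succ n ih =>
      intro x hx
      rw [Function.iterate_succ_apply']
      exact TmMem _ (ih x hx)
  -- itinerary shift
  have tau_shift1 : ∀ x : ℝ, shiftn 1 (tauPlus g0 g1 q x) = tauPlus g0 g1 q (Tplus g0 g1 q x) := by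
    intro x
    funext k
    show decide (q ≤ (Tplus g0 g1 q)^[k+1] x) = decide (q ≤ (Tplus g0 g1 q)^[k] (Tplus g0 g1 q x))
    rw [Function.iterate_succ_apply]
  have taum_shift1 : ∀ x : ℝ, shiftn 1 (tauMinus g0 g1 q x) = tauMinus g0 g1 q (Tminus g0 g1 q x) := by
    intro x
    funext k
    show decide (q < (Tminus g0 g1 q)^[k+1] x) = decide (q < (Tminus g0 g1 q)^[k] (Tminus g0 g1 q x))
    rw [Function.iterate_succ_apply]
  have tau_shiftn : ∀ (x : ℝ) (n : ℕ),
      shiftn n (tauPlus g0 g1 q x) = tauPlus g0 g1 q ((Tplus g0 g1 q)^[n] x) := by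
    intro x n
    funext k
    show decide (q ≤ (Tplus g0 g1 q)^[k+n] x) = decide (q ≤ (Tplus g0 g1 q)^[k] ((Tplus g0 g1 q)^[n] x))
    rw [Function.iterate_add_apply]
  -- orbit words reconstruct the point
  have orbitP : ∀ (k : ℕ) (x : ℝ), x ∈ Icc (0:ℝ) 1 →
      wApply f0 f1 (tauPlus g0 g1 q x) k ((Tplus g0 g1 q)^[k] x) = x := by
    intro k
    induction k with
    | zero => intro x _; rfl
    | succ k ih =>
      intro x hx
      show (cond (tauPlus g0 g1 q x 0) f1 f0)
        (wApply f0 f1 (shiftn 1 (tauPlus g0 g1 q x)) k ((Tplus g0 g1 q)^[k+1] x)) = x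
      rw [tau_shift1 x, Function.iterate_succ_apply, ih (Tplus g0 g1 q x) (Tmem x hx)]
      by_cases hxq : q ≤ x
      · have h0 : tauPlus g0 g1 q x 0 = true := decide_eq_true hxq
        rw [h0]
        show f1 (Tplus g0 g1 q x) = x
        rw [Tge x (not_lt.mpr hxq)]
        exact (hg1' x (le_trans hq.1.le hxq) hx.2).2
      · have h0 : tauPlus g0 g1 q x 0 = false := decide_eq_false hxq
        rw [h0]
        show f0 (Tplus g0 g1 q x) = x
        rw [Tlt x (not_le.mp hxq)]
        exact (hg0' x hx.1 (le_trans (not_le.mp hxq).le hq.2.le)).2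
  have orbitM : ∀ (k : ℕ) (x : ℝ), x ∈ Icc (0:ℝ) 1 →
      wApply f0 f1 (tauMinus g0 g1 q x) k ((Tminus g0 g1 q)^[k] x) = x := by
    intro k
    induction k with
    | zero => intro x _; rfl
    | succ k ih =>
      intro x hx
      show (cond (tauMinus g0 g1 q x 0) f1 f0)
        (wApply f0 f1 (shiftn 1 (tauMinus g0 g1 q x)) k ((Tminus g0 g1 q)^[k+1] x)) = x
      rw [taum_shift1 x, Function.iterate_succ_apply, ih (Tminus g0 g1 q x) (TmMem x hx)]
      by_cases hxq : q < x
      · have h0 : tauMinus g0 g1 q x 0 = true := decide_eq_true hxq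
        rw [h0]
        show f1 (Tminus g0 g1 q x) = x
        rw [TmGt x (not_le.mpr hxq)]
        exact (hg1' x (le_trans hq.1.le hxq.le) hx.2).2
      · have h0 : tauMinus g0 g1 q x 0 = false := decide_eq_false hxq
        rw [h0]
        show f0 (Tminus g0 g1 q x) = x
        rw [TmLe x (not_lt.mp hxq)]
        exact (hg0' x hx.1 (le_trans (not_lt.mp hxq) hq.2.le)).2
  -- analytic properties of word maps
  have wmem : ∀ (k : ℕ) (σ : ℕ → Bool) (x : ℝ), x ∈ Icc (0:ℝ) 1 →
      wApply f0 f1 σ k x ∈ Icc (0:ℝ) 1 := by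
    intro k
    induction k with
    | zero => intro σ x hx; exact hx
    | succ k ih =>
      intro σ x hx
      show (cond (σ 0) f1 f0) (wApply f0 f1 (shiftn 1 σ) k x) ∈ Icc (0:ℝ) 1
      cases σ 0
      · exact hf0map (ih _ x hx)
      · exact hf1map (ih _ x hx)
  have wlip : ∀ (k : ℕ) (σ : ℕ → Bool) (x y : ℝ), x ∈ Icc (0:ℝ) 1 → y ∈ Icc (0:ℝ) 1 →
      |wApply f0 f1 σ k x - wApply f0 f1 σ k y| ≤ c ^ k * |x - y| := by
    intro k
    induction k with
    | zero => intro σ x y _ _; simp [wApply]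
    | succ k ih =>
      intro σ x y hx hy
      have hA := wmem k (shiftn 1 σ) x hx
      have hB := wmem k (shiftn 1 σ) y hy
      have hrec := ih (shiftn 1 σ) x y hx hy
      show |(cond (σ 0) f1 f0) (wApply f0 f1 (shiftn 1 σ) k x)
          - (cond (σ 0) f1 f0) (wApply f0 f1 (shiftn 1 σ) k y)| ≤ _
      have hstep : |(cond (σ 0) f1 f0) (wApply f0 f1 (shiftn 1 σ) k x)
          - (cond (σ 0) f1 f0) (wApply f0 f1 (shiftn 1 σ) k y)|
          ≤ c * |wApply f0 f1 (shiftn 1 σ) k x - wApply f0 f1 (shiftn 1 σ) k y| := by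
        cases σ 0
        · exact lip0 _ hA _ hB
        · exact lip1 _ hA _ hB
      refine le_trans hstep ?_
      calc c * |wApply f0 f1 (shiftn 1 σ) k x - wApply f0 f1 (shiftn 1 σ) k y|
          ≤ c * (c ^ k * |x - y|) := mul_le_mul_of_nonneg_left hrec hcpos.le
        _ = c ^ (k+1) * |x - y| := by ring
  have wlt : ∀ (k : ℕ) (σ : ℕ → Bool) (x y : ℝ), x ∈ Icc (0:ℝ) 1 → y ∈ Icc (0:ℝ) 1 →
      x < y → wApply f0 f1 σ k x < wApply f0 f1 σ k y := by
    intro k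
    induction k with
    | zero => intro σ x y _ _ h; exact h
    | succ k ih =>
      intro σ x y hx hy hxy
      show (cond (σ 0) f1 f0) (wApply f0 f1 (shiftn 1 σ) k x)
          < (cond (σ 0) f1 f0) (wApply f0 f1 (shiftn 1 σ) k y)
      have hA := wmem k (shiftn 1 σ) x hx
      have hB := wmem k (shiftn 1 σ) y hy
      have hrec := ih (shiftn 1 σ) x y hx hy hxy
      cases σ 0
      · exact hf0m hA hB hrec
      · exact hf1m hA hB hrec
  have wle : ∀ (k : ℕ) (σ : ℕ → Bool) (x y : ℝ), x ∈ Icc (0:ℝ) 1 → y ∈ Icc (0:ℝ) 1 →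
      x ≤ y → wApply f0 f1 σ k x ≤ wApply f0 f1 σ k y := by
    intro k σ x y hx hy hxy
    rcases eq_or_lt_of_le hxy with rfl | h
    · exact le_refl _
    · exact (wlt k σ x y hx hy h).le
  -- convergence of the coding map
  have hconv : ∀ σ : ℕ → Bool,
      Tendsto (fun k => wordMap f0 f1 σ k 0) atTop (𝓝 (piCode f0 f1 σ)) := by
    intro σ
    have hcauchy : CauchySeq (fun k => wordMap f0 f1 σ k 0) := by
      apply cauchySeq_of_le_geometric c c hclt
      intro n
      have hfb : (cond (σ (n+1)) f1 f0) 0 ∈ Icc (0:ℝ) 1 := by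
        cases σ (n+1)
        · exact hf0map I0
        · exact hf1map I0
      have h1 : wordMap f0 f1 σ (n+1) 0 = wApply f0 f1 σ (n+1) ((cond (σ (n+1)) f1 f0) 0) := by
        rw [wordMap_eq, ← wApply_snoc]
      rw [Real.dist_eq, wordMap_eq, h1]
      have := wlip (n+1) σ 0 ((cond (σ (n+1)) f1 f0) 0) I0 hfb
      refine le_trans this ?_
      have habs : |0 - (cond (σ (n+1)) f1 f0) 0| ≤ 1 := by
        rw [zero_sub, abs_neg, abs_of_nonneg hfb.1]
        exact hfb.2
      calc c ^ (n+1) * |0 - (cond (σ (n+1)) f1 f0) 0| ≤ c ^ (n+1) * 1 :=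
            mul_le_mul_of_nonneg_left habs (pow_nonneg hcpos.le _)
        _ = c * c ^ n := by ring
    obtain ⟨L, hL⟩ := cauchySeq_tendsto_of_complete hcauchy
    rw [piCode, hL.limUnder_eq]
    exact hL
  have piMem : ∀ σ : ℕ → Bool, piCode f0 f1 σ ∈ Icc (0:ℝ) 1 := by
    intro σ
    refine isClosed_Icc.mem_of_tendsto (hconv σ) (Eventually.of_forall fun k => ?_)
    rw [wordMap_eq]
    exact wmem _ _ _ I0
  have piStep : ∀ σ : ℕ → Bool,
      piCode f0 f1 σ = (cond (σ 0) f1 f0) (piCode f0 f1 (shiftn 1 σ)) := by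
    intro σ
    have h1 : Tendsto (fun k => wordMap f0 f1 σ (k+1) 0) atTop (𝓝 (piCode f0 f1 σ)) :=
      (hconv σ).comp (tendsto_add_atTop_nat 1)
    have h2 : ∀ k : ℕ, wordMap f0 f1 σ (k+1) 0
        = (cond (σ 0) f1 f0) (wordMap f0 f1 (shiftn 1 σ) k 0) := by
      intro k
      rw [wordMap_eq, wordMap_eq]
      rfl
    have h3 : Tendsto (fun k => (cond (σ 0) f1 f0) (wordMap f0 f1 (shiftn 1 σ) k 0)) atTop
        (𝓝 ((cond (σ 0) f1 f0) (piCode f0 f1 (shiftn 1 σ)))) := by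
      rw [tendsto_iff_dist_tendsto_zero]
      have hbd : ∀ k : ℕ, dist ((cond (σ 0) f1 f0) (wordMap f0 f1 (shiftn 1 σ) k 0))
          ((cond (σ 0) f1 f0) (piCode f0 f1 (shiftn 1 σ)))
          ≤ c * dist (wordMap f0 f1 (shiftn 1 σ) k 0) (piCode f0 f1 (shiftn 1 σ)) := by
        intro k
        have hm1 : wordMap f0 f1 (shiftn 1 σ) k 0 ∈ Icc (0:ℝ) 1 := by
          rw [wordMap_eq]; exact wmem _ _ _ I0
        have hm2 := piMem (shiftn 1 σ)
        rw [Real.dist_eq, Real.dist_eq]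
        cases σ 0
        · exact lip0 _ hm1 _ hm2
        · exact lip1 _ hm1 _ hm2
      refine squeeze_zero (fun _ => dist_nonneg) hbd ?_
      have := tendsto_iff_dist_tendsto_zero.mp (hconv (shiftn 1 σ))
      have h4 := this.const_mul c
      simpa using h4
    have h5 : Tendsto (fun k => wordMap f0 f1 σ (k+1) 0) atTop
        (𝓝 ((cond (σ 0) f1 f0) (piCode f0 f1 (shiftn 1 σ)))) := by
      simpa only [← h2] using h3
    exact tendsto_nhds_unique h1 h5
  have piWord : ∀ (k : ℕ) (σ : ℕ → Bool),
      piCode f0 f1 σ = wApply f0 f1 σ k (piCode f0 f1 (shiftn k σ)) := by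
    intro k
    induction k with
    | zero => intro σ; rw [shiftn_zero]; rfl
    | succ k ih =>
      intro σ
      rw [piStep σ, ih (shiftn 1 σ), shiftn_shiftn]
      rfl
  have piBeta : piCode f0 f1 (tauPlus g0 g1 q q) = q := by
    have ht : Tendsto (fun k => wordMap f0 f1 (tauPlus g0 g1 q q) k 0) atTop (𝓝 q) := by
      rw [tendsto_iff_dist_tendsto_zero]
      have hbd : ∀ k : ℕ, dist (wordMap f0 f1 (tauPlus g0 g1 q q) k 0) q ≤ c ^ (k+1) := by
        intro k
        have hw := wlip (k+1) (tauPlus g0 g1 q q) 0 ((Tplus g0 g1 q)^[k+1] q) I0 (Torb (k+1) q hqI)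
        rw [orbitP (k+1) q hqI] at hw
        rw [Real.dist_eq, wordMap_eq]
        refine le_trans hw ?_
        have hm := Torb (k+1) q hqI
        have habs : |0 - (Tplus g0 g1 q)^[k+1] q| ≤ 1 := by
          rw [zero_sub, abs_neg, abs_of_nonneg hm.1]
          exact hm.2
        calc c ^ (k+1) * |0 - (Tplus g0 g1 q)^[k+1] q| ≤ c ^ (k+1) * 1 :=
              mul_le_mul_of_nonneg_left habs (pow_nonneg hcpos.le _)
          _ = c ^ (k+1) := mul_one _
      refine squeeze_zero (fun _ => dist_nonneg) hbd ?_
      have := tendsto_pow_atTop_nhds_zero_of_lt_one hcpos.le hclt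
      exact this.comp (tendsto_add_atTop_nat 1)
    exact tendsto_nhds_unique (hconv _) ht
  -- first symbols of the critical itineraries
  have hB0 : tauPlus g0 g1 q q 0 = true := decide_eq_true (le_refl q)
  have hA0 : tauMinus g0 g1 q q 0 = false := decide_eq_false (lt_irrefl q)
  -- forcing the admissibility branch from the first symbol
  have forceB : ∀ ν : ℕ → Bool,
      (lexLt ν (tauMinus g0 g1 q q) ∨ lexLe (tauPlus g0 g1 q q) ν) → ν 0 = true →
      lexLe (tauPlus g0 g1 q q) ν := by
    intro ν h h0
    rcases h with h | h
    · exfalso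
      obtain ⟨k, hag, hk⟩ := h
      obtain ⟨h1, _⟩ := blt hk
      rcases Nat.eq_zero_or_pos k with rfl | hkpos
      · rw [h0] at h1; exact Bool.noConfusion h1
      · have := hag 0 hkpos
        rw [h0, hA0] at this
        exact Bool.noConfusion this
    · exact h
  have forceA : ∀ ν : ℕ → Bool,
      (lexLt ν (tauMinus g0 g1 q q) ∨ lexLe (tauPlus g0 g1 q q) ν) → ν 0 = false →
      lexLt ν (tauMinus g0 g1 q q) := by
    intro ν h h0
    rcases h with h | h
    · exact h
    · exfalso
      rcases h with h | h
      · obtain ⟨k, hag, hk⟩ := h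
        obtain ⟨h1, h2⟩ := blt hk
        rcases Nat.eq_zero_or_pos k with rfl | hkpos
        · rw [h0] at h2; exact Bool.noConfusion h2
        · have := hag 0 hkpos
          rw [hB0, h0] at this
          exact Bool.noConfusion this
      · rw [← h, hB0] at h0
        exact Bool.noConfusion h0
  -- main estimate, plus side: admissible sequences lex-above β code points ≥ q
  have mainB : ∀ (m : ℕ) (ν : ℕ → Bool),
      (∀ n : ℕ, lexLt (shiftn n ν) (tauMinus g0 g1 q q) ∨ lexLe (tauPlus g0 g1 q q) (shiftn n ν)) →
      lexLe (tauPlus g0 g1 q q) ν → q - piCode f0 f1 ν ≤ c ^ m := by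
    intro m
    induction m with
    | zero =>
      intro ν _ _
      simp only [pow_zero]
      linarith [(piMem ν).1, hq1.le]
    | succ m ih =>
      intro ν hadm hBν
      rcases le_or_gt q (piCode f0 f1 ν) with h | h
      · have : (0:ℝ) ≤ c ^ (m+1) := pow_nonneg hcpos.le _
        linarith
      · rcases hBν with hlt | heq
        · obtain ⟨k, hag, hltk⟩ := hlt
          obtain ⟨hBk, hνk⟩ := blt hltk
          have hk1 : 1 ≤ k := by
            rcases Nat.eq_zero_or_pos k with rfl | h'
            · rw [hB0] at hBk; exact absurd hBk (by simp)
            · exact h'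
          have hq_eq : wApply f0 f1 (tauPlus g0 g1 q q) k ((Tplus g0 g1 q)^[k] q) = q :=
            orbitP k q hqI
          have hpi_eq : piCode f0 f1 ν
              = wApply f0 f1 (tauPlus g0 g1 q q) k (piCode f0 f1 (shiftn k ν)) := by
            rw [piWord k ν]
            exact wApply_congr f0 f1 k ν (tauPlus g0 g1 q q) (fun j hj => (hag j hj).symm) _
          have huI : (Tplus g0 g1 q)^[k] q ∈ Icc (0:ℝ) 1 := Torb k q hqI
          have hvI : piCode f0 f1 (shiftn k ν) ∈ Icc (0:ℝ) 1 := piMem _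
          have hBk' : decide (q ≤ (Tplus g0 g1 q)^[k] q) = false := hBk
          have huq : (Tplus g0 g1 q)^[k] q < q := not_le.mp (of_decide_eq_false hBk')
          have hadm' : ∀ n : ℕ, lexLt (shiftn n (shiftn k ν)) (tauMinus g0 g1 q q)
              ∨ lexLe (tauPlus g0 g1 q q) (shiftn n (shiftn k ν)) := by
            intro n; rw [shiftn_shiftn]; exact hadm (n + k)
          have h0' : (shiftn k ν) 0 = true := by
            show ν (0 + k) = true
            rw [Nat.zero_add]; exact hνk
          have hx0 := hadm' 0
          rw [shiftn_zero] at hx0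
          have hIH := ih (shiftn k ν) hadm' (forceB _ hx0 h0')
          rcases le_or_gt ((Tplus g0 g1 q)^[k] q) (piCode f0 f1 (shiftn k ν)) with huv | hvu
          · exfalso
            have : q ≤ piCode f0 f1 ν := by
              rw [hpi_eq]
              exact le_trans (le_of_eq hq_eq.symm) (wle k _ _ _ huI hvI huv)
            linarith
          · have hw := wlip k (tauPlus g0 g1 q q) ((Tplus g0 g1 q)^[k] q)
              (piCode f0 f1 (shiftn k ν)) huI hvI
            have hest : q - piCode f0 f1 ν
                ≤ c ^ k * ((Tplus g0 g1 q)^[k] q - piCode f0 f1 (shiftn k ν)) := by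
              calc q - piCode f0 f1 ν
                  = wApply f0 f1 (tauPlus g0 g1 q q) k ((Tplus g0 g1 q)^[k] q)
                    - wApply f0 f1 (tauPlus g0 g1 q q) k (piCode f0 f1 (shiftn k ν)) := by
                      rw [hq_eq, ← hpi_eq]
                _ ≤ |wApply f0 f1 (tauPlus g0 g1 q q) k ((Tplus g0 g1 q)^[k] q)
                    - wApply f0 f1 (tauPlus g0 g1 q q) k (piCode f0 f1 (shiftn k ν))| :=
                      le_abs_self _
                _ ≤ c ^ k * |(Tplus g0 g1 q)^[k] q - piCode f0 f1 (shiftn k ν)| := hw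
                _ = c ^ k * ((Tplus g0 g1 q)^[k] q - piCode f0 f1 (shiftn k ν)) := by
                      rw [abs_of_pos (by linarith)]
            have hck : c ^ k ≤ c := by
              have := pow_le_pow_of_le_one hcpos.le hclt.le hk1
              simpa using this
            calc q - piCode f0 f1 ν
                ≤ c ^ k * ((Tplus g0 g1 q)^[k] q - piCode f0 f1 (shiftn k ν)) := hest
              _ ≤ c ^ k * (q - piCode f0 f1 (shiftn k ν)) :=
                  mul_le_mul_of_nonneg_left (by linarith) (pow_nonneg hcpos.le _)
              _ ≤ c ^ k * c ^ m := mul_le_mul_of_nonneg_left hIH (pow_nonneg hcpos.le _)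
              _ ≤ c * c ^ m := mul_le_mul_of_nonneg_right hck (pow_nonneg hcpos.le _)
              _ = c ^ (m+1) := by ring
        · rw [← heq, piBeta]
          simpa using pow_nonneg hcpos.le (m+1)
  have Bge : ∀ ν : ℕ → Bool,
      (∀ n : ℕ, lexLt (shiftn n ν) (tauMinus g0 g1 q q) ∨ lexLe (tauPlus g0 g1 q q) (shiftn n ν)) →
      lexLe (tauPlus g0 g1 q q) ν → q ≤ piCode f0 f1 ν := by
    intro ν h1 h2
    by_contra hcon
    push_neg at hcon
    obtain ⟨m, hm⟩ := exists_pow_lt_of_lt_one (show (0:ℝ) < q - piCode f0 f1 ν by linarith) hclt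
    exact absurd (mainB m ν h1 h2) (not_le.mpr hm)
  -- main estimate, minus side
  have mainA : ∀ (m : ℕ) (ν : ℕ → Bool),
      (∀ n : ℕ, lexLt (shiftn n ν) (tauMinus g0 g1 q q) ∨ lexLe (tauPlus g0 g1 q q) (shiftn n ν)) →
      lexLt ν (tauMinus g0 g1 q q) → piCode f0 f1 ν - q ≤ c ^ m := by
    intro m
    induction m with
    | zero =>
      intro ν _ _
      simp only [pow_zero]
      linarith [(piMem ν).2, hq0.le]
    | succ m ih =>
      intro ν hadm hAν
      rcases le_or_gt (piCode f0 f1 ν) q with h | h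
      · have : (0:ℝ) ≤ c ^ (m+1) := pow_nonneg hcpos.le _
        linarith
      · obtain ⟨k, hag, hltk⟩ := hAν
        obtain ⟨hνk, hAk⟩ := blt hltk
        have hk1 : 1 ≤ k := by
          rcases Nat.eq_zero_or_pos k with rfl | h'
          · rw [hA0] at hAk; exact absurd hAk (by simp)
          · exact h'
        have hq_eq : wApply f0 f1 (tauMinus g0 g1 q q) k ((Tminus g0 g1 q)^[k] q) = q :=
          orbitM k q hqI
        have hpi_eq : piCode f0 f1 ν
            = wApply f0 f1 (tauMinus g0 g1 q q) k (piCode f0 f1 (shiftn k ν)) := by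
          rw [piWord k ν]
          exact wApply_congr f0 f1 k ν (tauMinus g0 g1 q q) hag _
        have huI : (Tminus g0 g1 q)^[k] q ∈ Icc (0:ℝ) 1 := TmOrb k q hqI
        have hvI : piCode f0 f1 (shiftn k ν) ∈ Icc (0:ℝ) 1 := piMem _
        have hAk' : decide (q < (Tminus g0 g1 q)^[k] q) = true := hAk
        have huq : q < (Tminus g0 g1 q)^[k] q := of_decide_eq_true hAk'
        have hadm' : ∀ n : ℕ, lexLt (shiftn n (shiftn k ν)) (tauMinus g0 g1 q q)
            ∨ lexLe (tauPlus g0 g1 q q) (shiftn n (shiftn k ν)) := by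
          intro n; rw [shiftn_shiftn]; exact hadm (n + k)
        have h0' : (shiftn k ν) 0 = false := by
          show ν (0 + k) = false
          rw [Nat.zero_add]; exact hνk
        have hx0 := hadm' 0
        rw [shiftn_zero] at hx0
        have hIH := ih (shiftn k ν) hadm' (forceA _ hx0 h0')
        rcases le_or_gt (piCode f0 f1 (shiftn k ν)) ((Tminus g0 g1 q)^[k] q) with hvu | huv
        · exfalso
          have : piCode f0 f1 ν ≤ q := by
            rw [hpi_eq]
            exact le_trans (wle k _ _ _ hvI huI hvu) (le_of_eq hq_eq)
          linarith
        · have hw := wlip k (tauMinus g0 g1 q q) (piCode f0 f1 (shiftn k ν))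
            ((Tminus g0 g1 q)^[k] q) hvI huI
          have hest : piCode f0 f1 ν - q
              ≤ c ^ k * (piCode f0 f1 (shiftn k ν) - (Tminus g0 g1 q)^[k] q) := by
            calc piCode f0 f1 ν - q
                = wApply f0 f1 (tauMinus g0 g1 q q) k (piCode f0 f1 (shiftn k ν))
                  - wApply f0 f1 (tauMinus g0 g1 q q) k ((Tminus g0 g1 q)^[k] q) := by
                    rw [hq_eq, ← hpi_eq]
              _ ≤ |wApply f0 f1 (tauMinus g0 g1 q q) k (piCode f0 f1 (shiftn k ν))
                  - wApply f0 f1 (tauMinus g0 g1 q q) k ((Tminus g0 g1 q)^[k] q)| :=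
                    le_abs_self _
              _ ≤ c ^ k * |piCode f0 f1 (shiftn k ν) - (Tminus g0 g1 q)^[k] q| := hw
              _ = c ^ k * (piCode f0 f1 (shiftn k ν) - (Tminus g0 g1 q)^[k] q) := by
                    rw [abs_of_pos (by linarith)]
          have hck : c ^ k ≤ c := by
            have := pow_le_pow_of_le_one hcpos.le hclt.le hk1
            simpa using this
          calc piCode f0 f1 ν - q
              ≤ c ^ k * (piCode f0 f1 (shiftn k ν) - (Tminus g0 g1 q)^[k] q) := hest
            _ ≤ c ^ k * (piCode f0 f1 (shiftn k ν) - q) :=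
                mul_le_mul_of_nonneg_left (by linarith) (pow_nonneg hcpos.le _)
            _ ≤ c ^ k * c ^ m := mul_le_mul_of_nonneg_left hIH (pow_nonneg hcpos.le _)
            _ ≤ c * c ^ m := mul_le_mul_of_nonneg_right hck (pow_nonneg hcpos.le _)
            _ = c ^ (m+1) := by ring
  have Ale : ∀ ν : ℕ → Bool,
      (∀ n : ℕ, lexLt (shiftn n ν) (tauMinus g0 g1 q q) ∨ lexLe (tauPlus g0 g1 q q) (shiftn n ν)) →
      lexLt ν (tauMinus g0 g1 q q) → piCode f0 f1 ν ≤ q := by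
    intro ν h1 h2
    by_contra hcon
    push_neg at hcon
    obtain ⟨m, hm⟩ := exists_pow_lt_of_lt_one (show (0:ℝ) < piCode f0 f1 ν - q by linarith) hclt
    exact absurd (mainA m ν h1 h2) (not_le.mpr hm)
  have Alt : ∀ ν : ℕ → Bool,
      (∀ n : ℕ, lexLt (shiftn n ν) (tauMinus g0 g1 q q) ∨ lexLe (tauPlus g0 g1 q q) (shiftn n ν)) →
      lexLt ν (tauMinus g0 g1 q q) → piCode f0 f1 ν < q := by
    intro ν hadm hAν
    obtain ⟨k, hag, hltk⟩ := hAν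
    obtain ⟨hνk, hAk⟩ := blt hltk
    have hq_eq : wApply f0 f1 (tauMinus g0 g1 q q) k ((Tminus g0 g1 q)^[k] q) = q :=
      orbitM k q hqI
    have hpi_eq : piCode f0 f1 ν
        = wApply f0 f1 (tauMinus g0 g1 q q) k (piCode f0 f1 (shiftn k ν)) := by
      rw [piWord k ν]
      exact wApply_congr f0 f1 k ν (tauMinus g0 g1 q q) hag _
    have hAk' : decide (q < (Tminus g0 g1 q)^[k] q) = true := hAk
    have huq : q < (Tminus g0 g1 q)^[k] q := of_decide_eq_true hAk'
    have hadm' : ∀ n : ℕ, lexLt (shiftn n (shiftn k ν)) (tauMinus g0 g1 q q)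
        ∨ lexLe (tauPlus g0 g1 q q) (shiftn n (shiftn k ν)) := by
      intro n; rw [shiftn_shiftn]; exact hadm (n + k)
    have h0' : (shiftn k ν) 0 = false := by
      show ν (0 + k) = false
      rw [Nat.zero_add]; exact hνk
    have hx0 := hadm' 0
    rw [shiftn_zero] at hx0
    have hv : piCode f0 f1 (shiftn k ν) ≤ q := Ale _ hadm' (forceA _ hx0 h0')
    have hlt2 : piCode f0 f1 (shiftn k ν) < (Tminus g0 g1 q)^[k] q := lt_of_le_of_lt hv huq
    calc piCode f0 f1 ν
        = wApply f0 f1 (tauMinus g0 g1 q q) k (piCode f0 f1 (shiftn k ν)) := hpi_eq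
      _ < wApply f0 f1 (tauMinus g0 g1 q q) k ((Tminus g0 g1 q)^[k] q) :=
          wlt k _ _ _ (piMem _) (TmOrb k q hqI) hlt2
      _ = q := hq_eq
  -- forward direction lemmas: itineraries of points are admissible
  have S1 : ∀ y : ℝ, y ∈ Icc (0:ℝ) 1 → q ≤ y →
      lexLe (tauPlus g0 g1 q q) (tauPlus g0 g1 q y) := by
    intro y hy hqy
    by_cases heq : tauPlus g0 g1 q q = tauPlus g0 g1 q y
    · exact Or.inr heq
    · obtain hne := Function.ne_iff.mp heq
      left
      have hspec : tauPlus g0 g1 q q (Nat.find hne) ≠ tauPlus g0 g1 q y (Nat.find hne) :=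
        Nat.find_spec hne
      have hag : ∀ j < Nat.find hne, tauPlus g0 g1 q q j = tauPlus g0 g1 q y j :=
        fun j hj => not_not.mp (Nat.find_min hne hj)
      have key : ∀ j, j ≤ Nat.find hne → (Tplus g0 g1 q)^[j] q ≤ (Tplus g0 g1 q)^[j] y := by
        intro j
        induction j with
        | zero => intro _; exact hqy
        | succ j ihj =>
          intro hjk
          have hj : j < Nat.find hne := Nat.lt_of_succ_le hjk
          have h1 := ihj (Nat.le_of_lt hj)
          have hsym : decide (q ≤ (Tplus g0 g1 q)^[j] q) = decide (q ≤ (Tplus g0 g1 q)^[j] y) :=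
            hag j hj
          have hqjI : (Tplus g0 g1 q)^[j] q ∈ Icc (0:ℝ) 1 := Torb j q hqI
          have hyjI : (Tplus g0 g1 q)^[j] y ∈ Icc (0:ℝ) 1 := Torb j y hy
          rw [Function.iterate_succ_apply', Function.iterate_succ_apply']
          by_cases hb : q ≤ (Tplus g0 g1 q)^[j] q
          · have hb2 : q ≤ (Tplus g0 g1 q)^[j] y :=
              of_decide_eq_true (hsym.symm.trans (decide_eq_true hb))
            rw [Tge _ (not_lt.mpr hb), Tge _ (not_lt.mpr hb2)]
            exact g1le _ _ (le_trans hq.1.le hb) h1 hyjI.2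
          · have hb2 : ¬ q ≤ (Tplus g0 g1 q)^[j] y :=
              of_decide_eq_false (hsym.symm.trans (decide_eq_false hb))
            rw [Tlt _ (not_le.mp hb), Tlt _ (not_le.mp hb2)]
            exact g0le _ _ hqjI.1 h1 (le_trans (not_le.mp hb2).le hq.2.le)
      have hqk := key (Nat.find hne) (le_refl _)
      by_cases hBk : q ≤ (Tplus g0 g1 q)^[Nat.find hne] q
      · exfalso
        have h2 : q ≤ (Tplus g0 g1 q)^[Nat.find hne] y := le_trans hBk hqk
        exact hspec ((decide_eq_true hBk).trans (decide_eq_true h2).symm)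
      · refine ⟨Nat.find hne, hag, ?_⟩
        have h1 : tauPlus g0 g1 q q (Nat.find hne) = false := decide_eq_false hBk
        have h2 : tauPlus g0 g1 q y (Nat.find hne) = true := by
          cases h : tauPlus g0 g1 q y (Nat.find hne)
          · exact absurd (h1.trans h.symm) hspec
          · rfl
        rw [h1, h2]
        exact Bool.false_lt_true
  have S2 : ∀ y : ℝ, y ∈ Icc (0:ℝ) 1 → y < q →
      lexLt (tauPlus g0 g1 q y) (tauMinus g0 g1 q q) := by
    intro y hy hyq
    have hdiff : ∃ k, tauPlus g0 g1 q y k ≠ tauMinus g0 g1 q q k := by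
      by_contra hall
      push_neg at hall
      have key : ∀ j : ℕ, (Tplus g0 g1 q)^[j] y < (Tminus g0 g1 q)^[j] q ∧
          q - y ≤ c ^ j * ((Tminus g0 g1 q)^[j] q - (Tplus g0 g1 q)^[j] y) := by
        intro j
        induction j with
        | zero => exact ⟨hyq, by simp⟩
        | succ j ih =>
          obtain ⟨h1, h2⟩ := ih
          have hsym : decide (q ≤ (Tplus g0 g1 q)^[j] y) = decide (q < (Tminus g0 g1 q)^[j] q) :=
            hall j
          have hyjI : (Tplus g0 g1 q)^[j] y ∈ Icc (0:ℝ) 1 := Torb j y hy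
          have hqjI : (Tminus g0 g1 q)^[j] q ∈ Icc (0:ℝ) 1 := TmOrb j q hqI
          rw [Function.iterate_succ_apply', Function.iterate_succ_apply']
          by_cases hb : q < (Tminus g0 g1 q)^[j] q
          · have hb2 : q ≤ (Tplus g0 g1 q)^[j] y :=
              of_decide_eq_true (hsym.trans (decide_eq_true hb))
            rw [Tge _ (not_lt.mpr hb2), TmGt _ (not_le.mpr hb)]
            have hd1 : f1 0 ≤ (Tplus g0 g1 q)^[j] y := le_trans hq.1.le hb2
            have hd2 : (Tminus g0 g1 q)^[j] q ≤ 1 := hqjI.2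
            have hmono : g1 ((Tplus g0 g1 q)^[j] y) < g1 ((Tminus g0 g1 q)^[j] q) :=
              g1lt _ _ hd1 h1 hd2
            refine ⟨hmono, ?_⟩
            obtain ⟨hu1, hu2⟩ := hg1' ((Tminus g0 g1 q)^[j] q) (le_trans hq.1.le hb.le) hd2
            obtain ⟨hv1, hv2⟩ := hg1' ((Tplus g0 g1 q)^[j] y) hd1 hyjI.2
            have hl := lip1 _ hu1 _ hv1
            rw [hu2, hv2] at hl
            rw [abs_of_pos (by linarith), abs_of_pos (by linarith)] at hl
            calc q - y ≤ c ^ j * ((Tminus g0 g1 q)^[j] q - (Tplus g0 g1 q)^[j] y) := h2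
              _ ≤ c ^ j * (c * (g1 ((Tminus g0 g1 q)^[j] q) - g1 ((Tplus g0 g1 q)^[j] y))) :=
                  mul_le_mul_of_nonneg_left hl (pow_nonneg hcpos.le _)
              _ = c ^ (j+1) * (g1 ((Tminus g0 g1 q)^[j] q) - g1 ((Tplus g0 g1 q)^[j] y)) := by
                  ring
          · have hb2 : ¬ q ≤ (Tplus g0 g1 q)^[j] y :=
              of_decide_eq_false (hsym.trans (decide_eq_false hb))
            rw [Tlt _ (not_le.mp hb2), TmLe _ (not_lt.mp hb)]
            have hd1 : (0:ℝ) ≤ (Tplus g0 g1 q)^[j] y := hyjI.1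
            have hd2 : (Tminus g0 g1 q)^[j] q ≤ f0 1 := le_trans (not_lt.mp hb) hq.2.le
            have hmono : g0 ((Tplus g0 g1 q)^[j] y) < g0 ((Tminus g0 g1 q)^[j] q) :=
              g0lt _ _ hd1 h1 hd2
            refine ⟨hmono, ?_⟩
            obtain ⟨hu1, hu2⟩ := hg0' ((Tminus g0 g1 q)^[j] q) (le_trans hd1 h1.le) hd2
            obtain ⟨hv1, hv2⟩ := hg0' ((Tplus g0 g1 q)^[j] y) hd1 (le_trans h1.le hd2)
            have hl := lip0 _ hu1 _ hv1
            rw [hu2, hv2] at hl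
            rw [abs_of_pos (by linarith), abs_of_pos (by linarith)] at hl
            calc q - y ≤ c ^ j * ((Tminus g0 g1 q)^[j] q - (Tplus g0 g1 q)^[j] y) := h2
              _ ≤ c ^ j * (c * (g0 ((Tminus g0 g1 q)^[j] q) - g0 ((Tplus g0 g1 q)^[j] y))) :=
                  mul_le_mul_of_nonneg_left hl (pow_nonneg hcpos.le _)
              _ = c ^ (j+1) * (g0 ((Tminus g0 g1 q)^[j] q) - g0 ((Tplus g0 g1 q)^[j] y)) := by
                  ring
      obtain ⟨j, hj⟩ := exists_pow_lt_of_lt_one (show (0:ℝ) < q - y by linarith) hclt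
      obtain ⟨k1, k2⟩ := key j
      have hda : (Tminus g0 g1 q)^[j] q - (Tplus g0 g1 q)^[j] y ≤ 1 := by
        have h3 := (TmOrb j q hqI).2
        have h4 := (Torb j y hy).1
        linarith
      have h5 : q - y ≤ c ^ j := by
        refine le_trans k2 ?_
        calc c ^ j * ((Tminus g0 g1 q)^[j] q - (Tplus g0 g1 q)^[j] y) ≤ c ^ j * 1 :=
              mul_le_mul_of_nonneg_left hda (pow_nonneg hcpos.le _)
          _ = c ^ j := mul_one _
      linarith
    have hspec : tauPlus g0 g1 q y (Nat.find hdiff) ≠ tauMinus g0 g1 q q (Nat.find hdiff) :=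
      Nat.find_spec hdiff
    have hag : ∀ j < Nat.find hdiff, tauPlus g0 g1 q y j = tauMinus g0 g1 q q j :=
      fun j hj => not_not.mp (Nat.find_min hdiff hj)
    have key2 : ∀ j, j ≤ Nat.find hdiff → (Tplus g0 g1 q)^[j] y < (Tminus g0 g1 q)^[j] q := by
      intro j
      induction j with
      | zero => intro _; exact hyq
      | succ j ihj =>
        intro hjk
        have hj : j < Nat.find hdiff := Nat.lt_of_succ_le hjk
        have h1 := ihj (Nat.le_of_lt hj)
        have hsym : decide (q ≤ (Tplus g0 g1 q)^[j] y) = decide (q < (Tminus g0 g1 q)^[j] q) :=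
          hag j hj
        have hyjI : (Tplus g0 g1 q)^[j] y ∈ Icc (0:ℝ) 1 := Torb j y hy
        have hqjI : (Tminus g0 g1 q)^[j] q ∈ Icc (0:ℝ) 1 := TmOrb j q hqI
        rw [Function.iterate_succ_apply', Function.iterate_succ_apply']
        by_cases hb : q < (Tminus g0 g1 q)^[j] q
        · have hb2 : q ≤ (Tplus g0 g1 q)^[j] y :=
            of_decide_eq_true (hsym.trans (decide_eq_true hb))
          rw [Tge _ (not_lt.mpr hb2), TmGt _ (not_le.mpr hb)]
          exact g1lt _ _ (le_trans hq.1.le hb2) h1 hqjI.2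
        · have hb2 : ¬ q ≤ (Tplus g0 g1 q)^[j] y :=
            of_decide_eq_false (hsym.trans (decide_eq_false hb))
          rw [Tlt _ (not_le.mp hb2), TmLe _ (not_lt.mp hb)]
          exact g0lt _ _ hyjI.1 h1 (le_trans (not_lt.mp hb) hq.2.le)
    have hyk := key2 (Nat.find hdiff) (le_refl _)
    by_cases hAk : q ≤ (Tplus g0 g1 q)^[Nat.find hdiff] y
    · exfalso
      have h2 : q < (Tminus g0 g1 q)^[Nat.find hdiff] q := lt_of_le_of_lt hAk hyk
      exact hspec ((decide_eq_true hAk).trans (decide_eq_true h2).symm)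
    · refine ⟨Nat.find hdiff, hag, ?_⟩
      have h1 : tauPlus g0 g1 q y (Nat.find hdiff) = false := decide_eq_false hAk
      have h2 : tauMinus g0 g1 q q (Nat.find hdiff) = true := by
        cases h : tauMinus g0 g1 q q (Nat.find hdiff)
        · exact absurd (h1.trans h.symm) hspec
        · rfl
      rw [h1, h2]
      exact Bool.false_lt_true
  -- final assembly
  ext ω
  simp only [mem_image, mem_setOf_eq]
  constructor
  · rintro ⟨x, hx, rfl⟩
    intro n
    have hshift := tau_shiftn x n
    have hxn : (Tplus g0 g1 q)^[n] x ∈ Icc (0:ℝ) 1 := Torb n x hx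
    rcases lt_or_ge ((Tplus g0 g1 q)^[n] x) q with h | h
    · left
      rw [hshift]
      exact S2 _ hxn h
    · right
      rw [hshift]
      exact S1 _ hxn h
  · intro hadm
    refine ⟨piCode f0 f1 ω, piMem ω, ?_⟩
    have horb : ∀ n : ℕ, (Tplus g0 g1 q)^[n] (piCode f0 f1 ω) = piCode f0 f1 (shiftn n ω) := by
      intro n
      induction n with
      | zero => rw [shiftn_zero]; rfl
      | succ n ih =>
        rw [Function.iterate_succ_apply', ih]
        have hadm' : ∀ m : ℕ, lexLt (shiftn m (shiftn n ω)) (tauMinus g0 g1 q q)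
            ∨ lexLe (tauPlus g0 g1 q q) (shiftn m (shiftn n ω)) := by
          intro m; rw [shiftn_shiftn]; exact hadm (m + n)
        have hsh : (shiftn n ω) 0 = ω n := by
          show ω (0 + n) = ω n
          rw [Nat.zero_add]
        have hstep := piStep (shiftn n ω)
        rw [shiftn_shiftn 1 n ω, Nat.add_comm 1 n] at hstep
        have hzI : piCode f0 f1 (shiftn (n+1) ω) ∈ Icc (0:ℝ) 1 := piMem _
        have hx0 := hadm' 0
        rw [shiftn_zero] at hx0
        cases hω : ω n
        · have hlt : piCode f0 f1 (shiftn n ω) < q :=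
            Alt (shiftn n ω) hadm' (forceA _ hx0 (hsh.trans hω))
          have hfz : piCode f0 f1 (shiftn n ω) = f0 (piCode f0 f1 (shiftn (n+1) ω)) := by
            rw [hstep, hsh, hω]; rfl
          rw [hfz] at hlt ⊢
          rw [Tlt _ hlt]
          exact hg0 _ hzI
        · have hge : q ≤ piCode f0 f1 (shiftn n ω) :=
            Bge (shiftn n ω) hadm' (forceB _ hx0 (hsh.trans hω))
          have hfz : piCode f0 f1 (shiftn n ω) = f1 (piCode f0 f1 (shiftn (n+1) ω)) := by
            rw [hstep, hsh, hω]; rfl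
          rw [hfz] at hge ⊢
          rw [Tge _ (not_lt.mpr hge)]
          exact hg1 _ hzI
    funext n
    show decide (q ≤ (Tplus g0 g1 q)^[n] (piCode f0 f1 ω)) = ω n
    rw [horb n]
    have hadm' : ∀ m : ℕ, lexLt (shiftn m (shiftn n ω)) (tauMinus g0 g1 q q)
        ∨ lexLe (tauPlus g0 g1 q q) (shiftn m (shiftn n ω)) := by
      intro m; rw [shiftn_shiftn]; exact hadm (m + n)
    have hsh : (shiftn n ω) 0 = ω n := by
      show ω (0 + n) = ω n
      rw [Nat.zero_add]
    have hx0 := hadm' 0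
    rw [shiftn_zero] at hx0
    cases hω : ω n
    · have hlt : piCode f0 f1 (shiftn n ω) < q :=
        Alt (shiftn n ω) hadm' (forceA _ hx0 (hsh.trans hω))
      exact decide_eq_false (not_le.mpr hlt)
    · have hge : q ≤ piCode f0 f1 (shiftn n ω) :=
        Bge (shiftn n ω) hadm' (forceB _ hx0 (hsh.trans hω))
      exact decide_eq_true hge
end

section
/- For an overlapping masked IFS with critical itineraries α and β, there is no integer k ≥ 1 such that S^k(α) = β or S^k(β) = α. Consequently Ω̄_q := Ω_q^+ ∪ Ω_q^- equals { ω ∈ {0,1}^∞ : for all n ≥ 0, S^n(ω) ∈ [0̄, α] ∪ [β, 1̄] }. -/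
open Set Filter Topology

/-- context structure bundling all hypotheses plus a common Lipschitz constant. -/
structure Ctx (f0 f1 g0 g1 : ℝ → ℝ) (q c : ℝ) : Prop where
  f0m : StrictMonoOn f0 (Icc 0 1)
  f1m : StrictMonoOn f1 (Icc 0 1)
  f0c : ContinuousOn f0 (Icc 0 1)
  f1c : ContinuousOn f1 (Icc 0 1)
  f0map : MapsTo f0 (Icc 0 1) (Icc 0 1)
  f1map : MapsTo f1 (Icc 0 1) (Icc 0 1)
  cnn : 0 ≤ c
  clt : c < 1
  lip0 : ∀ x ∈ Icc (0:ℝ) 1, ∀ y ∈ Icc (0:ℝ) 1, |f0 x - f0 y| ≤ c * |x - y|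
  lip1 : ∀ x ∈ Icc (0:ℝ) 1, ∀ y ∈ Icc (0:ℝ) 1, |f1 x - f1 y| ≤ c * |x - y|
  hf00 : f0 0 = 0
  hf11 : f1 1 = 1
  hf10pos : 0 < f1 0
  hf01lt : f0 1 < 1
  hq1 : f1 0 < q
  hq2 : q < f0 1
  hg0 : ∀ x ∈ Icc (0:ℝ) 1, g0 (f0 x) = x
  hg1 : ∀ x ∈ Icc (0:ℝ) 1, g1 (f1 x) = x

namespace Ctx

variable {f0 f1 g0 g1 : ℝ → ℝ} {q c : ℝ}

lemma q0 (H : Ctx f0 f1 g0 g1 q c) : 0 < q := H.hf10pos.trans H.hq1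
lemma q1 (H : Ctx f0 f1 g0 g1 q c) : q < 1 := H.hq2.trans H.hf01lt
lemma qIcc (H : Ctx f0 f1 g0 g1 q c) : q ∈ Icc (0:ℝ) 1 := ⟨H.q0.le, H.q1.le⟩

lemma surj0 (H : Ctx f0 f1 g0 g1 q c) {u : ℝ} (hu : u ∈ Icc 0 q) : ∃ a ∈ Icc (0:ℝ) 1, f0 a = u := by
  have h : u ∈ Icc (f0 0) (f0 1) := ⟨by rw [H.hf00]; exact hu.1, hu.2.trans H.hq2.le⟩
  have := intermediate_value_Icc (by norm_num : (0:ℝ) ≤ 1) H.f0c h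
  obtain ⟨a, ha, hfa⟩ := this
  exact ⟨a, ha, hfa⟩

lemma surj1 (H : Ctx f0 f1 g0 g1 q c) {u : ℝ} (hu : u ∈ Icc q 1) : ∃ a ∈ Icc (0:ℝ) 1, f1 a = u := by
  have h : u ∈ Icc (f1 0) (f1 1) := ⟨H.hq1.le.trans hu.1, by rw [H.hf11]; exact hu.2⟩
  have := intermediate_value_Icc (by norm_num : (0:ℝ) ≤ 1) H.f1c h
  obtain ⟨a, ha, hfa⟩ := this
  exact ⟨a, ha, hfa⟩

lemma dom0 (H : Ctx f0 f1 g0 g1 q c) {u : ℝ} (hu : u ∈ Icc 0 q) : g0 u ∈ Icc (0:ℝ) 1 ∧ f0 (g0 u) = u := by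
  obtain ⟨a, ha, hfa⟩ := H.surj0 hu
  have : g0 u = a := by rw [← hfa, H.hg0 a ha]
  rw [this, hfa]; exact ⟨ha, rfl⟩

lemma dom1 (H : Ctx f0 f1 g0 g1 q c) {u : ℝ} (hu : u ∈ Icc q 1) : g1 u ∈ Icc (0:ℝ) 1 ∧ f1 (g1 u) = u := by
  obtain ⟨a, ha, hfa⟩ := H.surj1 hu
  have : g1 u = a := by rw [← hfa, H.hg1 a ha]
  rw [this, hfa]; exact ⟨ha, rfl⟩

end Ctx

/-- symbol of a point: `s = true` is the plus convention, `s = false` the minus one. -/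
noncomputable def symq (q : ℝ) (s : Bool) (x : ℝ) : Bool :=
  cond s (decide (q ≤ x)) (decide (q < x))

/-- generic section map. -/
noncomputable def Tg (g0 g1 : ℝ → ℝ) (q : ℝ) (s : Bool) : ℝ → ℝ :=
  cond s (Tplus g0 g1 q) (Tminus g0 g1 q)

/-- generic itinerary. -/
noncomputable def taug (g0 g1 : ℝ → ℝ) (q : ℝ) (s : Bool) (x : ℝ) : ℕ → Bool :=
  fun n => symq q s ((Tg g0 g1 q s)^[n] x)

lemma taug_true (g0 g1 : ℝ → ℝ) (q : ℝ) : taug g0 g1 q true = tauPlus g0 g1 q := rfl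
lemma taug_false (g0 g1 : ℝ → ℝ) (q : ℝ) : taug g0 g1 q false = tauMinus g0 g1 q := rfl

lemma Tg_eq (g0 g1 : ℝ → ℝ) (q : ℝ) (s : Bool) (x : ℝ) :
    Tg g0 g1 q s x = if symq q s x then g1 x else g0 x := by
  cases s
  · show Tminus g0 g1 q x = _
    by_cases h : q < x
    · simp [Tminus, symq, h, not_le.mpr h]
    · simp [Tminus, symq, h, not_lt.mp h]
  · show Tplus g0 g1 q x = _
    by_cases h : q ≤ x
    · simp [Tplus, symq, h, not_lt.mpr h]
    · simp [Tplus, symq, h, not_le.mp h]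

lemma symq_true {q : ℝ} {s : Bool} {x : ℝ} (h : symq q s x = true) : q ≤ x := by
  cases s <;> simp [symq] at h
  · exact h.le
  · exact h

lemma symq_false {q : ℝ} {s : Bool} {x : ℝ} (h : symq q s x = false) : x ≤ q := by
  cases s <;> simp [symq] at h
  · exact h
  · exact h.le

namespace Ctx

variable {f0 f1 g0 g1 : ℝ → ℝ} {q c : ℝ}

/-- the key branch lemma: if the symbols of `x` (convention `s`) and `y` (convention `t`)
agree, then both points lie in the domain of a common branch. -/
lemma step (H : Ctx f0 f1 g0 g1 q c) {s t : Bool} {x y : ℝ}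
    (hx : x ∈ Icc (0:ℝ) 1) (hy : y ∈ Icc (0:ℝ) 1)
    (hsym : symq q s x = symq q t y) :
    ∃ fb : ℝ → ℝ, StrictMonoOn fb (Icc 0 1) ∧
      (∀ a ∈ Icc (0:ℝ) 1, ∀ b ∈ Icc (0:ℝ) 1, |fb a - fb b| ≤ c * |a - b|) ∧
      Tg g0 g1 q s x ∈ Icc (0:ℝ) 1 ∧ Tg g0 g1 q t y ∈ Icc (0:ℝ) 1 ∧
      fb (Tg g0 g1 q s x) = x ∧ fb (Tg g0 g1 q t y) = y := by
  cases hb : symq q s x with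
  | false =>
    have hby : symq q t y = false := by rw [← hsym, hb]
    have ex : Tg g0 g1 q s x = g0 x := by rw [Tg_eq, hb]; simp
    have ey : Tg g0 g1 q t y = g0 y := by rw [Tg_eq, hby]; simp
    have dx := H.dom0 ⟨hx.1, symq_false hb⟩
    have dy := H.dom0 ⟨hy.1, symq_false hby⟩
    exact ⟨f0, H.f0m, H.lip0, by rw [ex]; exact dx.1, by rw [ey]; exact dy.1,
      by rw [ex]; exact dx.2, by rw [ey]; exact dy.2⟩
  | true =>
    have hby : symq q t y = true := by rw [← hsym, hb]
    have ex : Tg g0 g1 q s x = g1 x := by rw [Tg_eq, hb]; simp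
    have ey : Tg g0 g1 q t y = g1 y := by rw [Tg_eq, hby]; simp
    have dx := H.dom1 ⟨symq_true hb, hx.2⟩
    have dy := H.dom1 ⟨symq_true hby, hy.2⟩
    exact ⟨f1, H.f1m, H.lip1, by rw [ex]; exact dx.1, by rw [ey]; exact dy.1,
      by rw [ex]; exact dx.2, by rw [ey]; exact dy.2⟩

lemma Tg_mem (H : Ctx f0 f1 g0 g1 q c) {s : Bool} {x : ℝ} (hx : x ∈ Icc (0:ℝ) 1) :
    Tg g0 g1 q s x ∈ Icc (0:ℝ) 1 := by
  cases hb : symq q s x with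
  | false =>
    have ex : Tg g0 g1 q s x = g0 x := by rw [Tg_eq, hb]; simp
    rw [ex]; exact (H.dom0 ⟨hx.1, symq_false hb⟩).1
  | true =>
    have ex : Tg g0 g1 q s x = g1 x := by rw [Tg_eq, hb]; simp
    rw [ex]; exact (H.dom1 ⟨symq_true hb, hx.2⟩).1

lemma iter_mem (H : Ctx f0 f1 g0 g1 q c) {s : Bool} {x : ℝ} (hx : x ∈ Icc (0:ℝ) 1) (n : ℕ) :
    (Tg g0 g1 q s)^[n] x ∈ Icc (0:ℝ) 1 := by
  induction n with
  | zero => simpa using hx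
  | succ n ih => rw [Function.iterate_succ_apply']; exact H.Tg_mem ih

end Ctx

lemma abs_sub_le_one' {a b : ℝ} (ha : a ∈ Icc (0:ℝ) 1) (hb : b ∈ Icc (0:ℝ) 1) : |a - b| ≤ 1 := by
  rw [abs_sub_le_iff]
  constructor <;> [skip; skip] <;> · obtain ⟨h1, h2⟩ := ha; obtain ⟨h3, h4⟩ := hb; linarith

namespace Ctx

variable {f0 f1 g0 g1 : ℝ → ℝ} {q c : ℝ}

/-- order invariant along matching orbits. -/
lemma inv (H : Ctx f0 f1 g0 g1 q c) {s t : Bool} {x y : ℝ}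
    (hx : x ∈ Icc (0:ℝ) 1) (hy : y ∈ Icc (0:ℝ) 1)
    (hxy : x ≤ y) (hst : x < y ∨ s = t) :
    ∀ j, (∀ i < j, taug g0 g1 q s x i = taug g0 g1 q t y i) →
      (Tg g0 g1 q s)^[j] x ≤ (Tg g0 g1 q t)^[j] y ∧
        ((Tg g0 g1 q s)^[j] x < (Tg g0 g1 q t)^[j] y ∨ s = t) := by
  intro j
  induction j with
  | zero => intro _; exact ⟨hxy, hst⟩
  | succ j ih =>
    intro hag
    obtain ⟨hle, hlt⟩ := ih (fun i hi => hag i (Nat.lt_succ_of_lt hi))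
    have hsym : symq q s ((Tg g0 g1 q s)^[j] x) = symq q t ((Tg g0 g1 q t)^[j] y) :=
      hag j (Nat.lt_succ_self j)
    obtain ⟨fb, fbm, _, hmx, hmy, hfx, hfy⟩ :=
      H.step (H.iter_mem hx j) (H.iter_mem hy j) hsym
    rw [Function.iterate_succ_apply', Function.iterate_succ_apply']
    constructor
    · by_contra hcon
      push_neg at hcon
      have := fbm hmy hmx hcon
      rw [hfx, hfy] at this
      exact absurd hle (not_le.mpr this)
    · rcases hlt with hlt | rfl
      · left
        by_contra hcon
        push_neg at hcon
        have := fbm.monotoneOn hmy hmx hcon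
        rw [hfx, hfy] at this
        exact absurd hlt (not_lt.mpr this)
      · right; rfl

/-- lexicographic comparison of itineraries. -/
lemma cmp (H : Ctx f0 f1 g0 g1 q c) {s t : Bool} {x y : ℝ}
    (hx : x ∈ Icc (0:ℝ) 1) (hy : y ∈ Icc (0:ℝ) 1)
    (hxy : x ≤ y) (hst : x < y ∨ s = t) :
    lexLe (taug g0 g1 q s x) (taug g0 g1 q t y) := by
  classical
  by_cases hall : ∀ n, taug g0 g1 q s x n = taug g0 g1 q t y n
  · exact Or.inr (funext hall)
  · push_neg at hall
    left
    set k := Nat.find hall with hkdef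
    have hkne : taug g0 g1 q s x k ≠ taug g0 g1 q t y k := Nat.find_spec hall
    have hag : ∀ j < k, taug g0 g1 q s x j = taug g0 g1 q t y j := by
      intro j hj
      exact not_ne_iff.mp (Nat.find_min hall hj)
    obtain ⟨hle, hlt⟩ := H.inv hx hy hxy hst k hag
    refine ⟨k, hag, ?_⟩
    cases hsx : taug g0 g1 q s x k with
    | true =>
      exfalso
      have hqx : q ≤ (Tg g0 g1 q s)^[k] x := symq_true hsx
      cases hsy : taug g0 g1 q t y k with
      | true => exact hkne (hsx.trans hsy.symm)
      | false =>
        have hqy : (Tg g0 g1 q t)^[k] y ≤ q := symq_false hsy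
        rcases hlt with hlt | rfl
        · exact absurd hlt (not_lt.mpr (hqy.trans hqx))
        · have hxy' : (Tg g0 g1 q s)^[k] x = (Tg g0 g1 q s)^[k] y :=
            le_antisymm hle (hqy.trans hqx)
          have : taug g0 g1 q s x k = taug g0 g1 q s y k := by
            show symq q s ((Tg g0 g1 q s)^[k] x) = symq q s ((Tg g0 g1 q s)^[k] y)
            rw [hxy']
          exact hkne this
    | false =>
      cases hsy : taug g0 g1 q t y k with
      | true => exact Bool.false_lt_true
      | false => exact absurd (hsx.trans hsy.symm) hkne

/-- separation: a minus-itinerary can never equal a plus-itinerary of a different point. -/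
lemma sep (H : Ctx f0 f1 g0 g1 q c) {x y : ℝ}
    (hx : x ∈ Icc (0:ℝ) 1) (hy : y ∈ Icc (0:ℝ) 1)
    (h : taug g0 g1 q false x = taug g0 g1 q true y) : x = y := by
  have key : ∀ n, |x - y| ≤ c ^ n * |(Tg g0 g1 q false)^[n] x - (Tg g0 g1 q true)^[n] y| := by
    intro n
    induction n with
    | zero => simp
    | succ n ih =>
      have hsym : symq q false ((Tg g0 g1 q false)^[n] x)
          = symq q true ((Tg g0 g1 q true)^[n] y) := congrFun h n
      obtain ⟨fb, _, fblip, hmx, hmy, hfx, hfy⟩ :=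
        H.step (H.iter_mem hx n) (H.iter_mem hy n) hsym
      have hexp : |(Tg g0 g1 q false)^[n] x - (Tg g0 g1 q true)^[n] y|
          ≤ c * |(Tg g0 g1 q false)^[n+1] x - (Tg g0 g1 q true)^[n+1] y| := by
        rw [Function.iterate_succ_apply', Function.iterate_succ_apply']
        calc |(Tg g0 g1 q false)^[n] x - (Tg g0 g1 q true)^[n] y|
            = |fb (Tg g0 g1 q false ((Tg g0 g1 q false)^[n] x))
                - fb (Tg g0 g1 q true ((Tg g0 g1 q true)^[n] y))| := by rw [hfx, hfy]
          _ ≤ _ := fblip _ hmx _ hmy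
      calc |x - y| ≤ c ^ n * |(Tg g0 g1 q false)^[n] x - (Tg g0 g1 q true)^[n] y| := ih
        _ ≤ c ^ n * (c * |(Tg g0 g1 q false)^[n+1] x - (Tg g0 g1 q true)^[n+1] y|) := by
            exact mul_le_mul_of_nonneg_left hexp (pow_nonneg H.cnn n)
        _ = c ^ (n+1) * |(Tg g0 g1 q false)^[n+1] x - (Tg g0 g1 q true)^[n+1] y| := by ring
  have key' : ∀ n, |x - y| ≤ c ^ n := by
    intro n
    calc |x - y| ≤ c ^ n * |(Tg g0 g1 q false)^[n] x - (Tg g0 g1 q true)^[n] y| := key n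
      _ ≤ c ^ n * 1 := mul_le_mul_of_nonneg_left
          (abs_sub_le_one' (H.iter_mem hx n) (H.iter_mem hy n)) (pow_nonneg H.cnn n)
      _ = c ^ n := mul_one _
  have h0 : |x - y| ≤ 0 :=
    ge_of_tendsto (tendsto_pow_atTop_nhds_zero_of_lt_one H.cnn H.clt)
      (Eventually.of_forall key')
  have := abs_nonneg (x - y)
  have : |x - y| = 0 := le_antisymm h0 this
  exact sub_eq_zero.mp (abs_eq_zero.mp this)

end Ctx

/-- prefix word map: `pref σ k = f_{σ 0} ∘ ⋯ ∘ f_{σ (k-1)}`. -/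
def pref (f0 f1 : ℝ → ℝ) : (ℕ → Bool) → ℕ → ℝ → ℝ
  | _, 0, u => u
  | σ, k+1, u => (cond (σ 0) f1 f0) (pref f0 f1 (shiftn 1 σ) k u)

namespace Ctx

variable {f0 f1 g0 g1 : ℝ → ℝ} {q c : ℝ}

lemma condf_mem (H : Ctx f0 f1 g0 g1 q c) (b : Bool) {u : ℝ} (hu : u ∈ Icc (0:ℝ) 1) :
    (cond b f1 f0) u ∈ Icc (0:ℝ) 1 := by
  cases b
  · exact H.f0map hu
  · exact H.f1map hu

lemma condf_lip (H : Ctx f0 f1 g0 g1 q c) (b : Bool) {u v : ℝ}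
    (hu : u ∈ Icc (0:ℝ) 1) (hv : v ∈ Icc (0:ℝ) 1) :
    |(cond b f1 f0) u - (cond b f1 f0) v| ≤ c * |u - v| := by
  cases b
  · exact H.lip0 u hu v hv
  · exact H.lip1 u hu v hv

lemma condf_mono (H : Ctx f0 f1 g0 g1 q c) (b : Bool) {u v : ℝ}
    (hu : u ∈ Icc (0:ℝ) 1) (hv : v ∈ Icc (0:ℝ) 1) (huv : u ≤ v) :
    (cond b f1 f0) u ≤ (cond b f1 f0) v := by
  cases b
  · exact H.f0m.monotoneOn hu hv huv
  · exact H.f1m.monotoneOn hu hv huv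

lemma pref_mem (H : Ctx f0 f1 g0 g1 q c) (σ : ℕ → Bool) (k : ℕ) {u : ℝ}
    (hu : u ∈ Icc (0:ℝ) 1) : pref f0 f1 σ k u ∈ Icc (0:ℝ) 1 := by
  induction k generalizing σ with
  | zero => exact hu
  | succ k ih => exact H.condf_mem _ (ih _)

lemma pref_lip (H : Ctx f0 f1 g0 g1 q c) (σ : ℕ → Bool) (k : ℕ) {u v : ℝ}
    (hu : u ∈ Icc (0:ℝ) 1) (hv : v ∈ Icc (0:ℝ) 1) :
    |pref f0 f1 σ k u - pref f0 f1 σ k v| ≤ c ^ k * |u - v| := by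
  induction k generalizing σ with
  | zero => simp [pref]
  | succ k ih =>
    calc |pref f0 f1 σ (k+1) u - pref f0 f1 σ (k+1) v|
        ≤ c * |pref f0 f1 (shiftn 1 σ) k u - pref f0 f1 (shiftn 1 σ) k v| :=
          H.condf_lip _ (H.pref_mem _ _ hu) (H.pref_mem _ _ hv)
      _ ≤ c * (c ^ k * |u - v|) := by
          exact mul_le_mul_of_nonneg_left (ih _) H.cnn
      _ = c ^ (k+1) * |u - v| := by ring

lemma pref_mono (H : Ctx f0 f1 g0 g1 q c) (σ : ℕ → Bool) (k : ℕ) {u v : ℝ}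
    (hu : u ∈ Icc (0:ℝ) 1) (hv : v ∈ Icc (0:ℝ) 1) (huv : u ≤ v) :
    pref f0 f1 σ k u ≤ pref f0 f1 σ k v := by
  induction k generalizing σ with
  | zero => exact huv
  | succ k ih => exact H.condf_mono _ (H.pref_mem _ _ hu) (H.pref_mem _ _ hv) (ih _)

end Ctx

lemma pref_congr {f0 f1 : ℝ → ℝ} {σ ρ : ℕ → Bool} {k : ℕ}
    (hag : ∀ i < k, σ i = ρ i) (u : ℝ) : pref f0 f1 σ k u = pref f0 f1 ρ k u := by
  induction k generalizing σ ρ with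
  | zero => rfl
  | succ k ih =>
    show (cond (σ 0) f1 f0) _ = (cond (ρ 0) f1 f0) _
    rw [hag 0 (Nat.succ_pos k)]
    exact congrArg _ (ih (fun i hi => hag (i+1) (Nat.succ_lt_succ hi)))

lemma pref_succ_right (f0 f1 : ℝ → ℝ) (σ : ℕ → Bool) (k : ℕ) (u : ℝ) :
    pref f0 f1 σ (k+1) u = pref f0 f1 σ k ((cond (σ k) f1 f0) u) := by
  induction k generalizing σ with
  | zero => rfl
  | succ k ih =>
    show (cond (σ 0) f1 f0) (pref f0 f1 (shiftn 1 σ) (k+1) u) = _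
    rw [ih (shiftn 1 σ)]
    rfl

/-- coding map of the IFS. -/
noncomputable def piC (f0 f1 : ℝ → ℝ) (σ : ℕ → Bool) : ℝ :=
  limUnder atTop (fun k => pref f0 f1 σ k 0)

namespace Ctx

variable {f0 f1 g0 g1 : ℝ → ℝ} {q c : ℝ}

lemma zero_mem : (0:ℝ) ∈ Icc (0:ℝ) 1 := ⟨le_refl 0, zero_le_one⟩

lemma piC_tendsto (H : Ctx f0 f1 g0 g1 q c) (σ : ℕ → Bool) :
    Tendsto (fun k => pref f0 f1 σ k 0) atTop (𝓝 (piC f0 f1 σ)) := by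
  have hcauchy : CauchySeq (fun k => pref f0 f1 σ k 0) := by
    apply cauchySeq_of_le_geometric c 1 H.clt
    intro n
    rw [Real.dist_eq, pref_succ_right]
    calc |pref f0 f1 σ n 0 - pref f0 f1 σ n ((cond (σ n) f1 f0) 0)|
        ≤ c ^ n * |0 - (cond (σ n) f1 f0) 0| :=
          H.pref_lip _ _ zero_mem (H.condf_mem _ zero_mem)
      _ ≤ c ^ n * 1 := mul_le_mul_of_nonneg_left
          (abs_sub_le_one' zero_mem (H.condf_mem _ zero_mem)) (pow_nonneg H.cnn n)
      _ = 1 * c ^ n := by ring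
  obtain ⟨L, hL⟩ := cauchySeq_tendsto_of_complete hcauchy
  rwa [piC, hL.limUnder_eq]

lemma piC_mem (H : Ctx f0 f1 g0 g1 q c) (σ : ℕ → Bool) : piC f0 f1 σ ∈ Icc (0:ℝ) 1 :=
  isClosed_Icc.mem_of_tendsto (H.piC_tendsto σ)
    (Eventually.of_forall fun k => H.pref_mem σ k zero_mem)

lemma piC_step (H : Ctx f0 f1 g0 g1 q c) (σ : ℕ → Bool) :
    piC f0 f1 σ = (cond (σ 0) f1 f0) (piC f0 f1 (shiftn 1 σ)) := by
  have h1 : Tendsto (fun k => pref f0 f1 σ (k+1) 0) atTop (𝓝 (piC f0 f1 σ)) :=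
    (H.piC_tendsto σ).comp (tendsto_add_atTop_nat 1)
  have h2 : Tendsto (fun k => pref f0 f1 (shiftn 1 σ) k 0) atTop
      (𝓝[Icc (0:ℝ) 1] (piC f0 f1 (shiftn 1 σ))) :=
    tendsto_nhdsWithin_of_tendsto_nhds_of_eventually_within _
      (H.piC_tendsto (shiftn 1 σ))
      (Eventually.of_forall fun k => H.pref_mem _ k zero_mem)
  have hc : ContinuousWithinAt (cond (σ 0) f1 f0) (Icc (0:ℝ) 1) (piC f0 f1 (shiftn 1 σ)) := by
    cases hb : σ 0
    · exact H.f0c.continuousWithinAt (H.piC_mem _)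
    · exact H.f1c.continuousWithinAt (H.piC_mem _)
  have h3 : Tendsto (fun k => (cond (σ 0) f1 f0) (pref f0 f1 (shiftn 1 σ) k 0)) atTop
      (𝓝 ((cond (σ 0) f1 f0) (piC f0 f1 (shiftn 1 σ)))) := hc.tendsto.comp h2
  exact tendsto_nhds_unique h1 h3

lemma piC_pref (H : Ctx f0 f1 g0 g1 q c) (σ : ℕ → Bool) (k : ℕ) :
    piC f0 f1 σ = pref f0 f1 σ k (piC f0 f1 (shiftn k σ)) := by
  induction k generalizing σ with
  | zero => rw [shiftn_zero]; rfl
  | succ k ih =>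
    show _ = (cond (σ 0) f1 f0) (pref f0 f1 (shiftn 1 σ) k (piC f0 f1 (shiftn (k+1) σ)))
    have : shiftn (k+1) σ = shiftn k (shiftn 1 σ) := by rw [shiftn_shiftn]
    rw [this, ← ih (shiftn 1 σ), ← H.piC_step σ]

end Ctx

lemma taug_shift (g0 g1 : ℝ → ℝ) (q : ℝ) (s : Bool) (x : ℝ) (k : ℕ) :
    shiftn k (taug g0 g1 q s x) = taug g0 g1 q s ((Tg g0 g1 q s)^[k] x) := by
  funext n
  show symq q s ((Tg g0 g1 q s)^[n + k] x) = symq q s ((Tg g0 g1 q s)^[n] ((Tg g0 g1 q s)^[k] x))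
  rw [Function.iterate_add_apply]

lemma symq_minus_true {q z : ℝ} (h : symq q false z = true) : q < z := by
  simpa [symq] using h

lemma symq_minus_false {q z : ℝ} (h : symq q false z = false) : z ≤ q := by
  simpa [symq] using h

lemma symq_plus_true {q z : ℝ} (h : symq q true z = true) : q ≤ z := by
  simpa [symq] using h

lemma symq_plus_false {q z : ℝ} (h : symq q true z = false) : z < q := by
  simpa [symq] using h

namespace Ctx

variable {f0 f1 g0 g1 : ℝ → ℝ} {q c : ℝ}

lemma cond_tau_apply (H : Ctx f0 f1 g0 g1 q c) {s : Bool} {x : ℝ} (hx : x ∈ Icc (0:ℝ) 1) :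
    (cond (taug g0 g1 q s x 0) f1 f0) (Tg g0 g1 q s x) = x := by
  cases hb : symq q s x with
  | false =>
    have e : Tg g0 g1 q s x = g0 x := by rw [Tg_eq, hb]; simp
    have h0 : taug g0 g1 q s x 0 = false := hb
    rw [h0, e]
    exact (H.dom0 ⟨hx.1, symq_false hb⟩).2
  | true =>
    have e : Tg g0 g1 q s x = g1 x := by rw [Tg_eq, hb]; simp
    have h0 : taug g0 g1 q s x 0 = true := hb
    rw [h0, e]
    exact (H.dom1 ⟨symq_true hb, hx.2⟩).2

lemma taug_one_shift (g0 g1 : ℝ → ℝ) (q : ℝ) (s : Bool) (x : ℝ) :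
    shiftn 1 (taug g0 g1 q s x) = taug g0 g1 q s (Tg g0 g1 q s x) := by
  rw [taug_shift]; rfl

lemma pref_taug (H : Ctx f0 f1 g0 g1 q c) {s : Bool} (k : ℕ) :
    ∀ x ∈ Icc (0:ℝ) 1, pref f0 f1 (taug g0 g1 q s x) k ((Tg g0 g1 q s)^[k] x) = x := by
  induction k with
  | zero => intro x _; rfl
  | succ k ih =>
    intro x hx
    show (cond (taug g0 g1 q s x 0) f1 f0)
        (pref f0 f1 (shiftn 1 (taug g0 g1 q s x)) k ((Tg g0 g1 q s)^[k+1] x)) = x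
    rw [taug_one_shift, Function.iterate_succ_apply, ih _ (H.Tg_mem hx)]
    exact H.cond_tau_apply hx

lemma piC_taug (H : Ctx f0 f1 g0 g1 q c) {s : Bool} {x : ℝ} (hx : x ∈ Icc (0:ℝ) 1) :
    piC f0 f1 (taug g0 g1 q s x) = x := by
  have key : ∀ k, |piC f0 f1 (taug g0 g1 q s x) - x| ≤ c ^ k := by
    intro k
    have e1 : piC f0 f1 (taug g0 g1 q s x)
        = pref f0 f1 (taug g0 g1 q s x) k (piC f0 f1 (taug g0 g1 q s ((Tg g0 g1 q s)^[k] x))) := by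
      rw [H.piC_pref (taug g0 g1 q s x) k, taug_shift]
    have e2 : x = pref f0 f1 (taug g0 g1 q s x) k ((Tg g0 g1 q s)^[k] x) :=
      (H.pref_taug k x hx).symm
    calc |piC f0 f1 (taug g0 g1 q s x) - x|
        = |pref f0 f1 (taug g0 g1 q s x) k (piC f0 f1 (taug g0 g1 q s ((Tg g0 g1 q s)^[k] x)))
            - pref f0 f1 (taug g0 g1 q s x) k ((Tg g0 g1 q s)^[k] x)| := by rw [← e1, ← e2]
      _ ≤ c ^ k * |piC f0 f1 (taug g0 g1 q s ((Tg g0 g1 q s)^[k] x)) - (Tg g0 g1 q s)^[k] x| :=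
          H.pref_lip _ _ (H.piC_mem _) (H.iter_mem hx k)
      _ ≤ c ^ k * 1 := mul_le_mul_of_nonneg_left
          (abs_sub_le_one' (H.piC_mem _) (H.iter_mem hx k)) (pow_nonneg H.cnn k)
      _ = c ^ k := mul_one _
  have h0 : |piC f0 f1 (taug g0 g1 q s x) - x| ≤ 0 :=
    ge_of_tendsto (tendsto_pow_atTop_nhds_zero_of_lt_one H.cnn H.clt)
      (Eventually.of_forall key)
  exact sub_eq_zero.mp (abs_eq_zero.mp (le_antisymm h0 (abs_nonneg _)))

end Ctx

/-- admissibility. -/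
def Adm (g0 g1 : ℝ → ℝ) (q : ℝ) (ω : ℕ → Bool) : Prop :=
  ∀ n : ℕ, lexLe (shiftn n ω) (tauMinus g0 g1 q q) ∨ lexLe (tauPlus g0 g1 q q) (shiftn n ω)

lemma Adm.shift {g0 g1 : ℝ → ℝ} {q : ℝ} {ω : ℕ → Bool} (h : Adm g0 g1 q ω) (k : ℕ) :
    Adm g0 g1 q (shiftn k ω) := by
  intro n
  rw [shiftn_shiftn]
  exact h (n + k)

lemma alpha_zero (g0 g1 : ℝ → ℝ) (q : ℝ) : tauMinus g0 g1 q q 0 = false := by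
  simp [tauMinus]

lemma beta_zero (g0 g1 : ℝ → ℝ) (q : ℝ) : tauPlus g0 g1 q q 0 = true := by
  simp [tauPlus]

lemma le_alpha {g0 g1 : ℝ → ℝ} {q : ℝ} {ω : ℕ → Bool} (hA : Adm g0 g1 q ω)
    (h0 : ω 0 = false) : lexLe ω (tauMinus g0 g1 q q) := by
  have := hA 0
  rw [shiftn_zero] at this
  rcases this with h | h
  · exact h
  · exfalso
    rcases h with ⟨k, hag, hk⟩ | heq
    · cases k with
      | zero => rw [beta_zero, h0] at hk; exact absurd hk (by decide)
      | succ k =>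
        have := hag 0 (Nat.succ_pos k)
        rw [beta_zero, h0] at this
        exact absurd this (by decide)
    · rw [← heq, beta_zero] at h0; exact absurd h0 (by decide)

lemma ge_beta {g0 g1 : ℝ → ℝ} {q : ℝ} {ω : ℕ → Bool} (hA : Adm g0 g1 q ω)
    (h0 : ω 0 = true) : lexLe (tauPlus g0 g1 q q) ω := by
  have := hA 0
  rw [shiftn_zero] at this
  rcases this with h | h
  · exfalso
    rcases h with ⟨k, hag, hk⟩ | heq
    · cases k with
      | zero => rw [alpha_zero, h0] at hk; exact absurd hk (by decide)
      | succ k =>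
        have := hag 0 (Nat.succ_pos k)
        rw [alpha_zero, h0] at this
        exact absurd this (by decide)
    · rw [heq, alpha_zero] at h0; exact absurd h0 (by decide)
  · exact h

namespace Ctx

variable {f0 f1 g0 g1 : ℝ → ℝ} {q c : ℝ}

lemma L0aux (H : Ctx f0 f1 g0 g1 q c) :
    ∀ N : ℕ, ∀ ω : ℕ → Bool, Adm g0 g1 q ω → ω 0 = false → piC f0 f1 ω ≤ q + c ^ N := by
  intro N
  induction N with
  | zero =>
    intro ω _ _
    have h1 := (H.piC_mem ω).2
    have h2 := H.q0
    rw [pow_zero]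
    linarith
  | succ N ih =>
    intro ω hA h0
    rcases le_alpha hA h0 with ⟨k, hag, hk⟩ | heq
    · rw [← taug_false g0 g1 q] at hag hk
      have hωk : ω k = false := (Bool.lt_iff.mp hk).1
      have hαk : taug g0 g1 q false q k = true := (Bool.lt_iff.mp hk).2
      have hk1 : 1 ≤ k := by
        rcases Nat.eq_zero_or_pos k with rfl | h
        · rw [show taug g0 g1 q false q 0 = false from alpha_zero g0 g1 q] at hαk
          exact absurd hαk (by decide)
        · exact h
      set z := (Tg g0 g1 q false)^[k] q with hzdef
      have hz : z ∈ Icc (0:ℝ) 1 := H.iter_mem H.qIcc k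
      have hqz : q < z := symq_minus_true hαk
      have e1 : piC f0 f1 ω = pref f0 f1 ω k (piC f0 f1 (shiftn k ω)) := H.piC_pref ω k
      have e2 : q = pref f0 f1 ω k z := by
        calc q = piC f0 f1 (taug g0 g1 q false q) := (H.piC_taug H.qIcc).symm
          _ = pref f0 f1 (taug g0 g1 q false q) k (piC f0 f1 (shiftn k (taug g0 g1 q false q))) :=
              H.piC_pref _ k
          _ = pref f0 f1 (taug g0 g1 q false q) k (piC f0 f1 (taug g0 g1 q false z)) := by
              rw [taug_shift]
          _ = pref f0 f1 (taug g0 g1 q false q) k z := by rw [H.piC_taug hz]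
          _ = pref f0 f1 ω k z := pref_congr (fun i hi => (hag i hi).symm) z
      have h0' : (shiftn k ω) 0 = false := by
        show ω (0 + k) = false
        rwa [Nat.zero_add]
      have ihk := ih (shiftn k ω) (hA.shift k) h0'
      set u := piC f0 f1 (shiftn k ω) with hudef
      have hu : u ∈ Icc (0:ℝ) 1 := H.piC_mem _
      rcases le_or_gt u z with hle' | hlt'
      · rw [e1]
        calc pref f0 f1 ω k u ≤ pref f0 f1 ω k z := H.pref_mono ω k hu hz hle'
          _ = q := e2.symm
          _ ≤ q + c ^ (N+1) := le_add_of_nonneg_right (pow_nonneg H.cnn _)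
      · have hlip := H.pref_lip ω k hu hz
        have h1 : pref f0 f1 ω k u - pref f0 f1 ω k z ≤ c ^ k * (u - z) := by
          have h2 : |u - z| = u - z := abs_of_pos (sub_pos.mpr hlt')
          calc pref f0 f1 ω k u - pref f0 f1 ω k z
              ≤ |pref f0 f1 ω k u - pref f0 f1 ω k z| := le_abs_self _
            _ ≤ c ^ k * |u - z| := hlip
            _ = c ^ k * (u - z) := by rw [h2]
        have h2 : u - z ≤ c ^ N := by linarith
        have h3 : c ^ k ≤ c := by
          calc c ^ k ≤ c ^ 1 := pow_le_pow_of_le_one H.cnn H.clt.le hk1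
            _ = c := pow_one c
        have h4 : c ^ k * (u - z) ≤ c * c ^ N :=
          mul_le_mul h3 h2 (sub_pos.mpr hlt').le H.cnn
        rw [e1]
        have h5 : c * c ^ N = c ^ (N + 1) := by ring
        rw [← e2] at h1
        linarith
    · rw [heq, ← taug_false g0 g1 q, H.piC_taug H.qIcc]
      exact le_add_of_nonneg_right (pow_nonneg H.cnn _)

lemma L0 (H : Ctx f0 f1 g0 g1 q c) {ω : ℕ → Bool} (hA : Adm g0 g1 q ω) (h0 : ω 0 = false) :
    piC f0 f1 ω ≤ q := by
  by_contra hcon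
  push_neg at hcon
  obtain ⟨N, hN⟩ : ∃ N, c ^ N < piC f0 f1 ω - q := by
    have := (tendsto_pow_atTop_nhds_zero_of_lt_one H.cnn H.clt).eventually
      (gt_mem_nhds (show (0:ℝ) < piC f0 f1 ω - q by linarith))
    exact this.exists
  have := H.L0aux N ω hA h0
  linarith

lemma L1aux (H : Ctx f0 f1 g0 g1 q c) :
    ∀ N : ℕ, ∀ ω : ℕ → Bool, Adm g0 g1 q ω → ω 0 = true → q - c ^ N ≤ piC f0 f1 ω := by
  intro N
  induction N with
  | zero =>
    intro ω _ _
    have h1 := (H.piC_mem ω).1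
    have h2 := H.q1
    rw [pow_zero]
    linarith
  | succ N ih =>
    intro ω hA h0
    rcases ge_beta hA h0 with ⟨k, hag, hk⟩ | heq
    · rw [← taug_true g0 g1 q] at hag hk
      have hβk : taug g0 g1 q true q k = false := (Bool.lt_iff.mp hk).1
      have hωk : ω k = true := (Bool.lt_iff.mp hk).2
      have hk1 : 1 ≤ k := by
        rcases Nat.eq_zero_or_pos k with rfl | h
        · rw [show taug g0 g1 q true q 0 = true from beta_zero g0 g1 q] at hβk
          exact absurd hβk (by decide)
        · exact h
      set z := (Tg g0 g1 q true)^[k] q with hzdef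
      have hz : z ∈ Icc (0:ℝ) 1 := H.iter_mem H.qIcc k
      have hqz : z < q := symq_plus_false hβk
      have e1 : piC f0 f1 ω = pref f0 f1 ω k (piC f0 f1 (shiftn k ω)) := H.piC_pref ω k
      have e2 : q = pref f0 f1 ω k z := by
        calc q = piC f0 f1 (taug g0 g1 q true q) := (H.piC_taug H.qIcc).symm
          _ = pref f0 f1 (taug g0 g1 q true q) k (piC f0 f1 (shiftn k (taug g0 g1 q true q))) :=
              H.piC_pref _ k
          _ = pref f0 f1 (taug g0 g1 q true q) k (piC f0 f1 (taug g0 g1 q true z)) := by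
              rw [taug_shift]
          _ = pref f0 f1 (taug g0 g1 q true q) k z := by rw [H.piC_taug hz]
          _ = pref f0 f1 ω k z := pref_congr (fun i hi => hag i hi) z
      have h0' : (shiftn k ω) 0 = true := by
        show ω (0 + k) = true
        rwa [Nat.zero_add]
      have ihk := ih (shiftn k ω) (hA.shift k) h0'
      set u := piC f0 f1 (shiftn k ω) with hudef
      have hu : u ∈ Icc (0:ℝ) 1 := H.piC_mem _
      rcases le_or_gt z u with hle' | hlt'
      · rw [e1]
        calc q - c ^ (N+1) ≤ q := by
              have := pow_nonneg H.cnn (N+1); linarith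
          _ = pref f0 f1 ω k z := e2
          _ ≤ pref f0 f1 ω k u := H.pref_mono ω k hz hu hle'
      · have hlip := H.pref_lip ω k hz hu
        have h1 : pref f0 f1 ω k z - pref f0 f1 ω k u ≤ c ^ k * (z - u) := by
          have h2 : |z - u| = z - u := abs_of_pos (sub_pos.mpr hlt')
          calc pref f0 f1 ω k z - pref f0 f1 ω k u
              ≤ |pref f0 f1 ω k z - pref f0 f1 ω k u| := le_abs_self _
            _ ≤ c ^ k * |z - u| := hlip
            _ = c ^ k * (z - u) := by rw [h2]
        have h2 : z - u ≤ c ^ N := by linarith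
        have h3 : c ^ k ≤ c := by
          calc c ^ k ≤ c ^ 1 := pow_le_pow_of_le_one H.cnn H.clt.le hk1
            _ = c := pow_one c
        have h4 : c ^ k * (z - u) ≤ c * c ^ N :=
          mul_le_mul h3 h2 (sub_pos.mpr hlt').le H.cnn
        rw [e1]
        have h5 : c * c ^ N = c ^ (N + 1) := by ring
        rw [← e2] at h1
        linarith
    · rw [← heq, ← taug_true g0 g1 q, H.piC_taug H.qIcc]
      have := pow_nonneg H.cnn (N+1)
      linarith

lemma L1 (H : Ctx f0 f1 g0 g1 q c) {ω : ℕ → Bool} (hA : Adm g0 g1 q ω) (h0 : ω 0 = true) :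
    q ≤ piC f0 f1 ω := by
  by_contra hcon
  push_neg at hcon
  obtain ⟨N, hN⟩ : ∃ N, c ^ N < q - piC f0 f1 ω := by
    have := (tendsto_pow_atTop_nhds_zero_of_lt_one H.cnn H.clt).eventually
      (gt_mem_nhds (show (0:ℝ) < q - piC f0 f1 ω by linarith))
    exact this.exists
  have := H.L1aux N ω hA h0
  linarith

end Ctx

lemma symq_eval {q y : ℝ} {s b : Bool} (h1 : b = false → y ≤ q) (h2 : b = true → q ≤ y)
    (h3 : y = q → b = s) : symq q s y = b := by
  cases b with
  | false =>
    have hy := h1 rfl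
    cases s with
    | false => simp [symq, not_lt.mpr hy]
    | true =>
      have hne : y ≠ q := fun h => by simpa using h3 h
      simp [symq, not_le.mpr (lt_of_le_of_ne hy hne)]
  | true =>
    have hy := h2 rfl
    cases s with
    | true => simp [symq, hy]
    | false =>
      have hne : y ≠ q := fun h => by simpa using h3 h
      simp [symq, lt_of_le_of_ne hy (Ne.symm hne)]

namespace Ctx

variable {f0 f1 g0 g1 : ℝ → ℝ} {q c : ℝ}

lemma piC_step_shift (H : Ctx f0 f1 g0 g1 q c) (ω : ℕ → Bool) (n : ℕ) :
    piC f0 f1 (shiftn n ω) = (cond (ω n) f1 f0) (piC f0 f1 (shiftn (n+1) ω)) := by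
  have := H.piC_step (shiftn n ω)
  rw [shiftn_shiftn] at this
  have h0 : (shiftn n ω) 0 = ω n := by show ω (0+n) = ω n; rw [Nat.zero_add]
  rw [h0] at this
  rw [this, Nat.add_comm 1 n]

lemma shift_head {ω : ℕ → Bool} (n : ℕ) : (shiftn n ω) 0 = ω n := by
  show ω (0+n) = ω n; rw [Nat.zero_add]

lemma C0 (H : Ctx f0 f1 g0 g1 q c) {ω : ℕ → Bool} (hA : Adm g0 g1 q ω)
    (h0 : ω 0 = false) (hpi : piC f0 f1 ω = q) : ω = tauMinus g0 g1 q q := by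
  by_contra hne
  obtain ⟨k, hag, hk⟩ := (le_alpha hA h0).resolve_right hne
  rw [← taug_false g0 g1 q] at hag hk
  have hωk : ω k = false := (Bool.lt_iff.mp hk).1
  have hαk : taug g0 g1 q false q k = true := (Bool.lt_iff.mp hk).2
  have hαk' : symq q false ((Tg g0 g1 q false)^[k] q) = true := hαk
  have key : ∀ i, i ≤ k → piC f0 f1 (shiftn i ω) = (Tg g0 g1 q false)^[i] q := by
    intro i
    induction i with
    | zero => intro _; rw [shiftn_zero]; simpa using hpi
    | succ i ih =>
      intro hik
      have hi' : i < k := Nat.lt_of_succ_le hik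
      have hpii := ih hi'.le
      have hagi : ω i = taug g0 g1 q false q i := hag i hi'
      have hstep := H.piC_step_shift ω i
      have hy'mem : piC f0 f1 (shiftn (i+1) ω) ∈ Icc (0:ℝ) 1 := H.piC_mem _
      rw [Function.iterate_succ_apply']
      cases hb : ω i with
      | false =>
        have hzb : taug g0 g1 q false q i = false := by rw [← hagi]; exact hb
        have hzb' : symq q false ((Tg g0 g1 q false)^[i] q) = false := hzb
        have e : Tg g0 g1 q false ((Tg g0 g1 q false)^[i] q)
            = g0 ((Tg g0 g1 q false)^[i] q) := by rw [Tg_eq, hzb']; simp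
        rw [e, ← hpii, hstep, hb]
        exact (H.hg0 _ hy'mem).symm
      | true =>
        have hzb : taug g0 g1 q false q i = true := by rw [← hagi]; exact hb
        have hzb' : symq q false ((Tg g0 g1 q false)^[i] q) = true := hzb
        have e : Tg g0 g1 q false ((Tg g0 g1 q false)^[i] q)
            = g1 ((Tg g0 g1 q false)^[i] q) := by rw [Tg_eq, hzb']; simp
        rw [e, ← hpii, hstep, hb]
        exact (H.hg1 _ hy'mem).symm
  have hzk := key k le_rfl
  have hqz : q < (Tg g0 g1 q false)^[k] q := symq_minus_true hαk'
  have h0' : (shiftn k ω) 0 = false := by rw [shift_head]; exact hωk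
  have := H.L0 (hA.shift k) h0'
  rw [hzk] at this
  linarith

lemma C1 (H : Ctx f0 f1 g0 g1 q c) {ω : ℕ → Bool} (hA : Adm g0 g1 q ω)
    (h0 : ω 0 = true) (hpi : piC f0 f1 ω = q) : ω = tauPlus g0 g1 q q := by
  by_contra hne
  have hne' : ¬ tauPlus g0 g1 q q = ω := fun h => hne h.symm
  obtain ⟨k, hag, hk⟩ := (ge_beta hA h0).resolve_right hne'
  rw [← taug_true g0 g1 q] at hag hk
  have hβk : taug g0 g1 q true q k = false := (Bool.lt_iff.mp hk).1
  have hωk : ω k = true := (Bool.lt_iff.mp hk).2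
  have hβk' : symq q true ((Tg g0 g1 q true)^[k] q) = false := hβk
  have key : ∀ i, i ≤ k → piC f0 f1 (shiftn i ω) = (Tg g0 g1 q true)^[i] q := by
    intro i
    induction i with
    | zero => intro _; rw [shiftn_zero]; simpa using hpi
    | succ i ih =>
      intro hik
      have hi' : i < k := Nat.lt_of_succ_le hik
      have hpii := ih hi'.le
      have hagi : taug g0 g1 q true q i = ω i := hag i hi'
      have hstep := H.piC_step_shift ω i
      have hy'mem : piC f0 f1 (shiftn (i+1) ω) ∈ Icc (0:ℝ) 1 := H.piC_mem _
      rw [Function.iterate_succ_apply']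
      cases hb : ω i with
      | false =>
        have hzb : taug g0 g1 q true q i = false := by rw [hagi]; exact hb
        have hzb' : symq q true ((Tg g0 g1 q true)^[i] q) = false := hzb
        have e : Tg g0 g1 q true ((Tg g0 g1 q true)^[i] q)
            = g0 ((Tg g0 g1 q true)^[i] q) := by rw [Tg_eq, hzb']; simp
        rw [e, ← hpii, hstep, hb]
        exact (H.hg0 _ hy'mem).symm
      | true =>
        have hzb : taug g0 g1 q true q i = true := by rw [hagi]; exact hb
        have hzb' : symq q true ((Tg g0 g1 q true)^[i] q) = true := hzb
        have e : Tg g0 g1 q true ((Tg g0 g1 q true)^[i] q)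
            = g1 ((Tg g0 g1 q true)^[i] q) := by rw [Tg_eq, hzb']; simp
        rw [e, ← hpii, hstep, hb]
        exact (H.hg1 _ hy'mem).symm
  have hzk := key k le_rfl
  have hqz : (Tg g0 g1 q true)^[k] q < q := symq_plus_false hβk'
  have h0' : (shiftn k ω) 0 = true := by rw [shift_head]; exact hωk
  have := H.L1 (hA.shift k) h0'
  rw [hzk] at this
  linarith

lemma realize_side (H : Ctx f0 f1 g0 g1 q c) {ω : ℕ → Bool} (hA : Adm g0 g1 q ω) (s : Bool)
    (hgood : ∀ n, piC f0 f1 (shiftn n ω) = q → ω n = s) :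
    taug g0 g1 q s (piC f0 f1 ω) = ω := by
  have hsym : ∀ n, symq q s (piC f0 f1 (shiftn n ω)) = ω n := by
    intro n
    apply symq_eval
    · intro hb
      exact H.L0 (hA.shift n) (by rw [shift_head]; exact hb)
    · intro hb
      exact H.L1 (hA.shift n) (by rw [shift_head]; exact hb)
    · exact hgood n
  have horb : ∀ n, (Tg g0 g1 q s)^[n] (piC f0 f1 ω) = piC f0 f1 (shiftn n ω) := by
    intro n
    induction n with
    | zero => rw [shiftn_zero]; rfl
    | succ n ih =>
      rw [Function.iterate_succ_apply', ih]
      have hstep := H.piC_step_shift ω n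
      have hy'mem : piC f0 f1 (shiftn (n+1) ω) ∈ Icc (0:ℝ) 1 := H.piC_mem _
      cases hb : ω n with
      | false =>
        have hsy : symq q s (piC f0 f1 (shiftn n ω)) = false := by rw [hsym n]; exact hb
        have e : Tg g0 g1 q s (piC f0 f1 (shiftn n ω)) = g0 (piC f0 f1 (shiftn n ω)) := by
          rw [Tg_eq, hsy]; simp
        rw [e, hstep, hb]
        exact H.hg0 _ hy'mem
      | true =>
        have hsy : symq q s (piC f0 f1 (shiftn n ω)) = true := by rw [hsym n]; exact hb
        have e : Tg g0 g1 q s (piC f0 f1 (shiftn n ω)) = g1 (piC f0 f1 (shiftn n ω)) := by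
          rw [Tg_eq, hsy]; simp
        rw [e, hstep, hb]
        exact H.hg1 _ hy'mem
  funext n
  show symq q s ((Tg g0 g1 q s)^[n] (piC f0 f1 ω)) = ω n
  rw [horb n, hsym n]

end Ctx

namespace Ctx

variable {f0 f1 g0 g1 : ℝ → ℝ} {q c : ℝ}

lemma no_shift (H : Ctx f0 f1 g0 g1 q c) (k : ℕ) :
    shiftn k (tauMinus g0 g1 q q) ≠ tauPlus g0 g1 q q ∧
    shiftn k (tauPlus g0 g1 q q) ≠ tauMinus g0 g1 q q := by
  constructor
  · intro h
    rw [← taug_false g0 g1 q, ← taug_true g0 g1 q, taug_shift] at h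
    have heq : (Tg g0 g1 q false)^[k] q = q := H.sep (H.iter_mem H.qIcc k) H.qIcc h
    have h0 : symq q false ((Tg g0 g1 q false)^[k] q) = symq q true q := congrFun h 0
    have hqq : symq q true q = true := by simp [symq]
    rw [hqq] at h0
    have := symq_minus_true h0
    rw [heq] at this
    exact lt_irrefl q this
  · intro h
    rw [← taug_false g0 g1 q, ← taug_true g0 g1 q, taug_shift] at h
    have heq : q = (Tg g0 g1 q true)^[k] q := H.sep H.qIcc (H.iter_mem H.qIcc k) h.symm
    have h0 : symq q true ((Tg g0 g1 q true)^[k] q) = symq q false q := congrFun h 0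
    have hqq : symq q false q = false := by simp [symq]
    rw [hqq] at h0
    have := symq_plus_false h0
    rw [← heq] at this
    exact lt_irrefl q this

end Ctx


/-- No shift of one critical itinerary equals the other, and
`Ω̄_q = Ω_q^+ ∪ Ω_q^- = { ω : ∀ n, Sⁿω ∈ [0̄,α] ∪ [β,1̄] }`. -/
theorem stmt6
    (f0 f1 g0 g1 : ℝ → ℝ) (q : ℝ)
    (hf0m : StrictMonoOn f0 (Icc 0 1)) (hf1m : StrictMonoOn f1 (Icc 0 1))
    (hf0c : ContinuousOn f0 (Icc 0 1)) (hf1c : ContinuousOn f1 (Icc 0 1))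
    (hf0map : MapsTo f0 (Icc 0 1) (Icc 0 1)) (hf1map : MapsTo f1 (Icc 0 1) (Icc 0 1))
    (hf0lip : ∃ c, 0 ≤ c ∧ c < 1 ∧ ∀ x ∈ Icc (0:ℝ) 1, ∀ y ∈ Icc (0:ℝ) 1, |f0 x - f0 y| ≤ c * |x - y|)
    (hf1lip : ∃ c, 0 ≤ c ∧ c < 1 ∧ ∀ x ∈ Icc (0:ℝ) 1, ∀ y ∈ Icc (0:ℝ) 1, |f1 x - f1 y| ≤ c * |x - y|)
    (hf00 : f0 0 = 0) (hf11 : f1 1 = 1)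
    (hf10pos : 0 < f1 0) (hoverf0f1 : f1 0 < f0 1) (hf01lt : f0 1 < 1)
    (hq : q ∈ Ioo (f1 0) (f0 1))
    (hg0 : ∀ x ∈ Icc (0:ℝ) 1, g0 (f0 x) = x) (hg1 : ∀ x ∈ Icc (0:ℝ) 1, g1 (f1 x) = x) :
    (∀ k : ℕ, 1 ≤ k →
        shiftn k (tauMinus g0 g1 q q) ≠ tauPlus g0 g1 q q ∧
        shiftn k (tauPlus g0 g1 q q) ≠ tauMinus g0 g1 q q) ∧
    (tauPlus g0 g1 q '' (Icc 0 1) ∪ tauMinus g0 g1 q '' (Icc 0 1)) =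
      {ω : ℕ → Bool | ∀ n : ℕ,
        lexLe (shiftn n ω) (tauMinus g0 g1 q q) ∨ lexLe (tauPlus g0 g1 q q) (shiftn n ω)} := by
  obtain ⟨c0, hc00, hc01, hlip0⟩ := hf0lip
  obtain ⟨c1, hc10, hc11, hlip1⟩ := hf1lip
  set c := max c0 c1 with hc
  have H : Ctx f0 f1 g0 g1 q c :=
    { f0m := hf0m, f1m := hf1m, f0c := hf0c, f1c := hf1c, f0map := hf0map, f1map := hf1map
      cnn := le_trans hc00 (le_max_left _ _)
      clt := max_lt hc01 hc11
      lip0 := fun x hx y hy => (hlip0 x hx y hy).trans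
        (mul_le_mul_of_nonneg_right (le_max_left _ _) (abs_nonneg _))
      lip1 := fun x hx y hy => (hlip1 x hx y hy).trans
        (mul_le_mul_of_nonneg_right (le_max_right _ _) (abs_nonneg _))
      hf00 := hf00, hf11 := hf11, hf10pos := hf10pos, hf01lt := hf01lt
      hq1 := hq.1, hq2 := hq.2, hg0 := hg0, hg1 := hg1 }
  refine ⟨fun k _ => H.no_shift k, ?_⟩
  ext ω
  simp only [Set.mem_union, Set.mem_image, Set.mem_setOf_eq]
  constructor
  · rintro (⟨x, hx, rfl⟩ | ⟨x, hx, rfl⟩) <;> intro n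
    · rw [← taug_true g0 g1 q, taug_shift]
      have hy : (Tg g0 g1 q true)^[n] x ∈ Icc (0:ℝ) 1 := H.iter_mem hx n
      rcases lt_or_ge ((Tg g0 g1 q true)^[n] x) q with hlt | hge
      · left
        rw [← taug_false g0 g1 q]
        exact H.cmp hy H.qIcc hlt.le (Or.inl hlt)
      · right
        exact H.cmp H.qIcc hy hge (Or.inr rfl)
    · rw [← taug_false g0 g1 q, taug_shift]
      have hy : (Tg g0 g1 q false)^[n] x ∈ Icc (0:ℝ) 1 := H.iter_mem hx n
      rcases le_or_gt ((Tg g0 g1 q false)^[n] x) q with hle | hgt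
      · left
        exact H.cmp hy H.qIcc hle (Or.inr rfl)
      · right
        rw [← taug_true g0 g1 q]
        exact H.cmp H.qIcc hy hgt.le (Or.inl hgt)
  · intro hω
    have hA : Adm g0 g1 q ω := hω
    by_cases hminus : ∀ n, piC f0 f1 (shiftn n ω) = q → ω n = false
    · right
      refine ⟨piC f0 f1 ω, H.piC_mem ω, ?_⟩
      rw [← taug_false g0 g1 q]
      exact H.realize_side hA false hminus
    · by_cases hplus : ∀ n, piC f0 f1 (shiftn n ω) = q → ω n = true
      · left
        refine ⟨piC f0 f1 ω, H.piC_mem ω, ?_⟩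
        rw [← taug_true g0 g1 q]
        exact H.realize_side hA true hplus
      · exfalso
        push_neg at hminus hplus
        obtain ⟨n, hn, hn'⟩ := hminus
        obtain ⟨m, hm, hm'⟩ := hplus
        have hωn : ω n = true := by revert hn'; cases ω n <;> simp
        have hωm : ω m = false := by revert hm'; cases ω m <;> simp
        have hβ : shiftn n ω = tauPlus g0 g1 q q :=
          H.C1 (hA.shift n) (by rw [Ctx.shift_head]; exact hωn) hn
        have hα : shiftn m ω = tauMinus g0 g1 q q :=
          H.C0 (hA.shift m) (by rw [Ctx.shift_head]; exact hωm) hm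
        have hnm : n ≠ m := by
          rintro rfl
          rw [hωn] at hωm
          exact absurd hωm (by decide)
        rcases lt_or_gt_of_ne hnm with hlt | hgt
        · have hcomp : shiftn (m-n) (tauPlus g0 g1 q q) = tauMinus g0 g1 q q := by
            rw [← hβ, shiftn_shiftn, Nat.sub_add_cancel hlt.le, hα]
          exact (H.no_shift (m-n)).2 hcomp
        · have hcomp : shiftn (n-m) (tauMinus g0 g1 q q) = tauPlus g0 g1 q q := by
            rw [← hα, shiftn_shiftn, Nat.sub_add_cancel hgt.le, hβ]
          exact (H.no_shift (n-m)).1 hcomp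
end
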